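/- arXiv:2304.07225 — 6 statements merged into one kernel-verified Lean document; each statement's English description precedes it below -/
import Mathlib

section
/- Fix k ∈ ℕ, σ > 0, and the matrices A(k) and B(k) built from ARMA coefficients a(1),…,a(p), b(1),…,b(q). Then: (i) I − A(k) is invertible and the matrix L(k) := σ·(I − A(k))⁻¹·B(k) is lower triangular with every diagonal entry equal to σ (in particular positive); (ii) for every ε ∈ ℝ^{k+1}, the vector n ∈ ℝ^{k+1} defined recursively by n(m) = Σ_{j=1}^{min(m,p)} a(j)·n(m−j) + σ·ε(m) + σ·Σ_{j=1}^{min(m,q)} b(j)·ε(m−j) for m = 0,…,k satisfies n = L(k)·ε; (iii) consequently Σ(k) := L(k)·L(k)ᵀ is positive definite and L(k) is the (unique) Cholesky factor of Σ(k), i.e., the unique lower-triangular matrix with positive diagonal entries such that L(k)·L(k)ᵀ = Σ(k). -/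
open Matrix Finset

/-- The strictly lower-triangular matrix `A(k)` built from the AR coefficients
`a(1), …, a(p)`: its `(m, m−j)` entry equals `a j` for `1 ≤ j ≤ min (m, p)`,
and all other entries are zero. -/
def armaA (k p : ℕ) (a : ℕ → ℝ) : Matrix (Fin (k + 1)) (Fin (k + 1)) ℝ :=
  Matrix.of fun m i =>
    if i.val < m.val ∧ m.val - i.val ≤ p then a (m.val - i.val) else 0

/-- The unit lower-triangular matrix `B(k)` built from the MA coefficients
`b(1), …, b(q)`: ones on the main diagonal, `(m, m−j)` entry equal to `b j`
for `1 ≤ j ≤ min (m, q)`, and all other entries zero. -/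
def armaB (k q : ℕ) (b : ℕ → ℝ) : Matrix (Fin (k + 1)) (Fin (k + 1)) ℝ :=
  Matrix.of fun m i =>
    if i = m then 1
    else if i.val < m.val ∧ m.val - i.val ≤ q then b (m.val - i.val) else 0

/-- `L(k) := σ · (I − A(k))⁻¹ · B(k)`. -/
noncomputable def armaL (k p q : ℕ) (a b : ℕ → ℝ) (σ : ℝ) :
    Matrix (Fin (k + 1)) (Fin (k + 1)) ℝ :=
  σ • ((1 - armaA k p a)⁻¹ * armaB k q b)

section Aux

variable {k p q : ℕ} {a b : ℕ → ℝ} {σ : ℝ}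

lemma armaA_lower : (armaA k p a).BlockTriangular OrderDual.toDual := by
  intro i j h
  have hij : (i : ℕ) < (j : ℕ) := h
  simp only [armaA, of_apply, ite_eq_right_iff]
  intro ⟨h1, _⟩
  omega

lemma armaB_lower : (armaB k q b).BlockTriangular OrderDual.toDual := by
  intro i j h
  have hij : (i : ℕ) < (j : ℕ) := h
  simp only [armaB, of_apply]
  rw [if_neg (by exact fun hh => absurd hh (by simp [Fin.ext_iff]; omega)), if_neg]
  rintro ⟨h1, _⟩
  omega

lemma armaB_diag (i : Fin (k + 1)) : armaB k q b i i = 1 := by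
  simp [armaB]

lemma oneSubA_lower : ((1 : Matrix (Fin (k+1)) (Fin (k+1)) ℝ) - armaA k p a).BlockTriangular
    OrderDual.toDual :=
  (Matrix.blockTriangular_one).sub armaA_lower

lemma oneSubA_diag (i : Fin (k + 1)) :
    ((1 : Matrix (Fin (k+1)) (Fin (k+1)) ℝ) - armaA k p a) i i = 1 := by
  simp [armaA, Matrix.one_apply, Matrix.sub_apply]

/-- Units from lower triangular with nonzero diagonal. -/
lemma isUnit_of_lower {M : Matrix (Fin (k+1)) (Fin (k+1)) ℝ}
    (h : M.BlockTriangular OrderDual.toDual) (hd : ∀ i, M i i ≠ 0) : IsUnit M := by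
  rw [Matrix.isUnit_iff_isUnit_det, Matrix.det_of_lowerTriangular M h, isUnit_iff_ne_zero]
  exact Finset.prod_ne_zero_iff.2 fun i _ => hd i

lemma isUnit_oneSubA : IsUnit ((1 : Matrix (Fin (k+1)) (Fin (k+1)) ℝ) - armaA k p a) :=
  isUnit_of_lower oneSubA_lower (fun i => by rw [oneSubA_diag]; exact one_ne_zero)

/-- Diagonal of a product of lower-triangular matrices. -/
lemma mul_diag_lower {X Y : Matrix (Fin (k+1)) (Fin (k+1)) ℝ}
    (hX : X.BlockTriangular OrderDual.toDual) (hY : Y.BlockTriangular OrderDual.toDual)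
    (i : Fin (k+1)) : (X * Y) i i = X i i * Y i i := by
  rw [Matrix.mul_apply]
  apply Finset.sum_eq_single i
  · intro t _ ht
    rcases lt_or_gt_of_ne ht with hlt | hgt
    · rw [hY (show OrderDual.toDual i < OrderDual.toDual t from hlt), mul_zero]
    · rw [hX (show OrderDual.toDual t < OrderDual.toDual i from hgt), zero_mul]
  · intro h; exact absurd (Finset.mem_univ i) h

lemma invOneSubA_lower : (((1 : Matrix (Fin (k+1)) (Fin (k+1)) ℝ) - armaA k p a)⁻¹).BlockTriangular
    OrderDual.toDual := by
  haveI := (isUnit_oneSubA (k := k) (p := p) (a := a)).invertible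
  exact Matrix.blockTriangular_inv_of_blockTriangular oneSubA_lower

lemma invOneSubA_diag (i : Fin (k + 1)) :
    ((1 : Matrix (Fin (k+1)) (Fin (k+1)) ℝ) - armaA k p a)⁻¹ i i = 1 := by
  have h1 : (((1 : Matrix (Fin (k+1)) (Fin (k+1)) ℝ) - armaA k p a)⁻¹ *
      ((1 : Matrix (Fin (k+1)) (Fin (k+1)) ℝ) - armaA k p a)) i i = 1 := by
    rw [Matrix.nonsing_inv_mul _ ((Matrix.isUnit_iff_isUnit_det _).1 isUnit_oneSubA)]
    simp [Matrix.one_apply]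
  rwa [mul_diag_lower invOneSubA_lower oneSubA_lower, oneSubA_diag, mul_one] at h1

lemma armaL_lower : (armaL k p q a b σ).BlockTriangular OrderDual.toDual := by
  intro i j h
  simp only [armaL, Matrix.smul_apply, smul_eq_mul]
  rw [(invOneSubA_lower.mul armaB_lower) h, mul_zero]

lemma armaL_diag (i : Fin (k + 1)) : armaL k p q a b σ i i = σ := by
  simp only [armaL, Matrix.smul_apply, smul_eq_mul]
  rw [mul_diag_lower invOneSubA_lower armaB_lower, invOneSubA_diag, armaB_diag]
  ring

lemma isUnit_armaL (hσ : 0 < σ) : IsUnit (armaL k p q a b σ) :=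
  isUnit_of_lower armaL_lower (fun i => by rw [armaL_diag]; exact ne_of_gt hσ)

/-- Key re-indexing of the lower-triangular sums. -/
lemma sum_shift (m : Fin (k + 1)) (r : ℕ) (c : ℕ → ℝ) (v : Fin (k + 1) → ℝ) :
    (∑ i : Fin (k + 1),
      (if i.val < m.val ∧ m.val - i.val ≤ r then c (m.val - i.val) else 0) * v i)
    = ∑ j ∈ Finset.Icc 1 (min m.val r),
        c j * v ⟨m.val - j, Nat.lt_of_le_of_lt (Nat.sub_le _ _) m.isLt⟩ := by
  simp only [ite_mul, zero_mul]
  rw [← Finset.sum_filter]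
  refine Finset.sum_nbij' (fun i => m.val - i.val)
    (fun j => (⟨m.val - j, Nat.lt_of_le_of_lt (Nat.sub_le _ _) m.isLt⟩ : Fin (k + 1)))
    ?_ ?_ ?_ ?_ ?_
  · intro i hi
    simp only [Finset.mem_filter, Finset.mem_univ, true_and] at hi
    simp only [Finset.mem_Icc, le_min_iff]
    exact ⟨Nat.one_le_iff_ne_zero.2 (Nat.sub_ne_zero_of_lt hi.1),
      Nat.sub_le _ _, hi.2⟩
  · intro j hj
    simp only [Finset.mem_Icc, le_min_iff] at hj
    obtain ⟨hj1, hjm, hjr⟩ := hj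
    simp only [Finset.mem_filter, Finset.mem_univ, true_and]
    constructor
    · exact Nat.sub_lt (lt_of_lt_of_le (Nat.lt_of_lt_of_le Nat.zero_lt_one hj1) hjm) hj1
    · rw [Nat.sub_sub_self hjm]; exact hjr
  · intro i hi
    simp only [Finset.mem_filter, Finset.mem_univ, true_and] at hi
    ext
    simp [Nat.sub_sub_self (le_of_lt hi.1)]
  · intro j hj
    simp only [Finset.mem_Icc, le_min_iff] at hj
    exact Nat.sub_sub_self hj.2.1
  · intro i hi
    simp only [Finset.mem_filter, Finset.mem_univ, true_and] at hi
    congr 2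
    exact Fin.ext (Nat.sub_sub_self hi.1.le).symm

lemma mulVec_armaA (m : Fin (k + 1)) (v : Fin (k + 1) → ℝ) :
    (armaA k p a *ᵥ v) m
      = ∑ j ∈ Finset.Icc 1 (min m.val p),
          a j * v ⟨m.val - j, Nat.lt_of_le_of_lt (Nat.sub_le _ _) m.isLt⟩ := by
  rw [Matrix.mulVec, dotProduct]
  exact sum_shift m p a v

lemma mulVec_armaB (m : Fin (k + 1)) (v : Fin (k + 1) → ℝ) :
    (armaB k q b *ᵥ v) m
      = v m + ∑ j ∈ Finset.Icc 1 (min m.val q),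
          b j * v ⟨m.val - j, Nat.lt_of_le_of_lt (Nat.sub_le _ _) m.isLt⟩ := by
  rw [Matrix.mulVec, dotProduct]
  have hsplit : ∀ i : Fin (k + 1),
      armaB k q b m i * v i
        = (if i = m then (1:ℝ) else 0) * v i
          + (if i.val < m.val ∧ m.val - i.val ≤ q then b (m.val - i.val) else 0) * v i := by
    intro i
    by_cases h : i = m
    · subst h
      simp [armaB]
    · simp only [armaB, of_apply, if_neg h]
      ring
  rw [Finset.sum_congr rfl (fun i _ => hsplit i), Finset.sum_add_distrib]
  congr 1
  · simp
  · exact sum_shift m q b v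

end Aux

/-- Theorem 1 (Recursion for the Cholesky factor): `I − A(k)` is invertible;
`L(k) = σ (I − A(k))⁻¹ B(k)` is lower triangular with all diagonal entries equal
to `σ > 0`; any vector `n` satisfying the ARMA recursion driven by `ε` equals
`L(k) ⬝ ε`; and `Σ(k) := L(k) L(k)ᵀ` is positive definite with `L(k)` its unique
Cholesky factor. -/
theorem arma_cholesky_factor (k p q : ℕ) (a b : ℕ → ℝ) (σ : ℝ) (hσ : 0 < σ) :
    IsUnit (1 - armaA k p a) ∧
    (∀ i j : Fin (k + 1), i < j → armaL k p q a b σ i j = 0) ∧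
    (∀ i : Fin (k + 1), armaL k p q a b σ i i = σ) ∧
    (∀ ε n : Fin (k + 1) → ℝ,
      (∀ m : Fin (k + 1),
        n m = (∑ j ∈ Finset.Icc 1 (min m.val p),
                a j * n ⟨m.val - j, Nat.lt_of_le_of_lt (Nat.sub_le _ _) m.isLt⟩)
            + σ * ε m
            + σ * ∑ j ∈ Finset.Icc 1 (min m.val q),
                b j * ε ⟨m.val - j, Nat.lt_of_le_of_lt (Nat.sub_le _ _) m.isLt⟩) →
      n = (armaL k p q a b σ).mulVec ε) ∧
    (armaL k p q a b σ * (armaL k p q a b σ)ᵀ).PosDef ∧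
    (∀ L' : Matrix (Fin (k + 1)) (Fin (k + 1)) ℝ,
      (∀ i j : Fin (k + 1), i < j → L' i j = 0) →
      (∀ i : Fin (k + 1), 0 < L' i i) →
      L' * L'ᵀ = armaL k p q a b σ * (armaL k p q a b σ)ᵀ →
      L' = armaL k p q a b σ) := by
  set L := armaL k p q a b σ with hLdef
  have hLlow : L.BlockTriangular OrderDual.toDual := armaL_lower
  have hLdiag : ∀ i, L i i = σ := fun i => armaL_diag i
  have hLunit : IsUnit L := isUnit_armaL hσ
  have hLdet : IsUnit L.det := (Matrix.isUnit_iff_isUnit_det _).1 hLunit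
  refine ⟨isUnit_oneSubA, fun i j h => hLlow (show OrderDual.toDual j < OrderDual.toDual i from h),
    hLdiag, ?_, ?_, ?_⟩
  · -- recursion
    intro ε n hn
    have key : ((1 : Matrix (Fin (k+1)) (Fin (k+1)) ℝ) - armaA k p a) *ᵥ n
        = σ • (armaB k q b *ᵥ ε) := by
      funext m
      rw [Matrix.sub_mulVec, Matrix.one_mulVec]
      simp only [Pi.sub_apply, Pi.smul_apply, smul_eq_mul]
      rw [mulVec_armaA, mulVec_armaB, hn m]
      ring
    have h2 : n = ((1 : Matrix (Fin (k+1)) (Fin (k+1)) ℝ) - armaA k p a)⁻¹ *ᵥ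
        (((1 : Matrix (Fin (k+1)) (Fin (k+1)) ℝ) - armaA k p a) *ᵥ n) := by
      rw [Matrix.mulVec_mulVec, Matrix.nonsing_inv_mul _
        ((Matrix.isUnit_iff_isUnit_det _).1 isUnit_oneSubA), Matrix.one_mulVec]
    rw [h2, key, Matrix.mulVec_smul, Matrix.mulVec_mulVec, hLdef, armaL,
      Matrix.smul_mulVec]
  · -- PosDef
    refine Matrix.PosDef.of_dotProduct_mulVec_pos ?_ ?_
    · rw [Matrix.IsHermitian, conjTranspose_eq_transpose_of_trivial, Matrix.transpose_mul,
        Matrix.transpose_transpose]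
    · intro x hx
      have hstar : (star x : Fin (k+1) → ℝ) = x := by
        funext i; simp
      rw [hstar, ← Matrix.mulVec_mulVec, Matrix.dotProduct_mulVec, ← Matrix.mulVec_transpose]
      set y := Lᵀ *ᵥ x with hy
      have hyne : y ≠ 0 := by
        intro h0
        apply hx
        have hTdet : IsUnit (Lᵀ).det := by rwa [Matrix.det_transpose]
        have h1 : (Lᵀ)⁻¹ *ᵥ (Lᵀ *ᵥ x) = 0 := by rw [← hy, h0, Matrix.mulVec_zero]
        rwa [Matrix.mulVec_mulVec, Matrix.nonsing_inv_mul _ hTdet, Matrix.one_mulVec] at h1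
      have h0 : 0 ≤ y ⬝ᵥ y := Finset.sum_nonneg fun i _ => mul_self_nonneg _
      rcases h0.lt_or_eq with h | h
      · exact h
      · exact absurd (dotProduct_self_eq_zero.1 h.symm) hyne
  · -- uniqueness
    intro L' hL'low' hL'pos hE
    have hL'low : L'.BlockTriangular OrderDual.toDual := fun i j h => hL'low' i j h
    have hL'unit : IsUnit L' := isUnit_of_lower hL'low (fun i => ne_of_gt (hL'pos i))
    have hL'det : IsUnit L'.det := (Matrix.isUnit_iff_isUnit_det _).1 hL'unit
    have hL'Tdet : IsUnit (L'ᵀ).det := by rwa [Matrix.det_transpose]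
    set M := L'⁻¹ * L with hMdef
    haveI := hL'unit.invertible
    have hMlow : M.BlockTriangular OrderDual.toDual :=
      (Matrix.blockTriangular_inv_of_blockTriangular hL'low).mul hLlow
    have hMT : Mᵀ = Lᵀ * (L'ᵀ)⁻¹ := by
      rw [hMdef, Matrix.transpose_mul, Matrix.transpose_nonsing_inv]
    have hMmul : M * Mᵀ = 1 := by
      rw [hMT, hMdef]
      calc L'⁻¹ * L * (Lᵀ * (L'ᵀ)⁻¹) = L'⁻¹ * (L * Lᵀ) * (L'ᵀ)⁻¹ := by
            noncomm_ring
        _ = L'⁻¹ * (L' * L'ᵀ) * (L'ᵀ)⁻¹ := by rw [hE]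
        _ = (L'⁻¹ * L') * (L'ᵀ * (L'ᵀ)⁻¹) := by noncomm_ring
        _ = 1 := by
            rw [Matrix.nonsing_inv_mul _ hL'det, Matrix.mul_nonsing_inv _ hL'Tdet, one_mul]
    haveI : Invertible M := invertibleOfRightInverse _ _ hMmul
    have hMTlow : Mᵀ.BlockTriangular OrderDual.toDual := by
      have : M⁻¹ = Mᵀ := Matrix.inv_eq_right_inv hMmul
      rw [← this]
      exact Matrix.blockTriangular_inv_of_blockTriangular hMlow
    have hMoff : ∀ i j : Fin (k + 1), i ≠ j → M i j = 0 := by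
      intro i j hij
      rcases lt_or_gt_of_ne hij with h | h
      · exact hMlow (show OrderDual.toDual j < OrderDual.toDual i from h)
      · exact hMTlow (show OrderDual.toDual i < OrderDual.toDual j from h)
    have hLM : L = L' * M := by
      rw [hMdef, ← Matrix.mul_assoc, Matrix.mul_nonsing_inv _ hL'det, Matrix.one_mul]
    have hMdiagpos : ∀ i, 0 < M i i := by
      intro i
      have hσi : σ = L' i i * M i i := by
        have hs : ∑ j : Fin (k+1), L' i j * M j i = L' i i * M i i := by
          apply Finset.sum_eq_single
          · intro t _ ht; rw [hMoff t i ht, mul_zero]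
          · intro h; exact absurd (Finset.mem_univ i) h
        rw [← hLdiag i, hLM, Matrix.mul_apply, hs]
      have h1 : M i i = σ / L' i i := by
        field_simp [ne_of_gt (hL'pos i)] at hσi ⊢
        linarith [hσi]
      rw [h1]
      exact div_pos hσ (hL'pos i)
    have hMdiag : ∀ i, M i i = 1 := by
      intro i
      have hsq : M i i * M i i = 1 := by
        have h1 : (M * Mᵀ) i i = 1 := by rw [hMmul]; simp [Matrix.one_apply]
        rw [Matrix.mul_apply] at h1
        have hs : ∑ j : Fin (k+1), M i j * Mᵀ j i = M i i * M i i := by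
          rw [show M i i * M i i = M i i * Mᵀ i i from by rw [Matrix.transpose_apply]]
          apply Finset.sum_eq_single
          · intro t _ ht; rw [Matrix.transpose_apply, hMoff i t (Ne.symm ht), zero_mul]
          · intro h; exact absurd (Finset.mem_univ i) h
        rw [← hs]; exact h1
      nlinarith [hMdiagpos i]
    have hM1 : M = 1 := by
      ext i j
      by_cases h : i = j
      · subst h; rw [hMdiag]; simp [Matrix.one_apply]
      · rw [hMoff i j h, Matrix.one_apply_ne h]
    rw [hLM, hM1, Matrix.mul_one]
end

section
/- Fix k ∈ ℕ, σ > 0, and the matrices A(k) and B(k) built from ARMA coefficients a(1),…,a(p), b(1),…,b(q), and set L(k) := σ·(I − A(k))⁻¹·B(k). Then for every z ∈ ℝ^{k+1}, the vector ẑ := L(k)⁻¹·z satisfies the inverse ARMA recursion ẑ(m) = −Σ_{j=1}^{min(m,q)} b(j)·ẑ(m−j) + (1/σ)·z(m) − Σ_{j=1}^{min(m,p)} (a(j)/σ)·z(m−j) for every m = 0,…,k. -/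
open Matrix Finset

lemma armaA_mulVec (k r : ℕ) (c : ℕ → ℝ) (v : Fin (k+1) → ℝ) (m : Fin (k+1)) :
    (armaA k r c).mulVec v m =
      ∑ j ∈ Finset.Icc 1 (min m.val r),
        c j * v ⟨m.val - j, Nat.lt_of_le_of_lt (Nat.sub_le _ _) m.isLt⟩ := by
  unfold armaA Matrix.mulVec dotProduct
  simp only [Matrix.of_apply, ite_mul, zero_mul]
  rw [← Finset.sum_filter]
  refine Finset.sum_nbij' (fun i => m.val - i.val)
    (fun j => ⟨m.val - j, Nat.lt_of_le_of_lt (Nat.sub_le _ _) m.isLt⟩) ?_ ?_ ?_ ?_ ?_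
  · intro i hi
    simp only [Finset.mem_filter, Finset.mem_univ, true_and] at hi
    simp only [Finset.mem_Icc, le_min_iff]
    omega
  · intro j hj
    simp only [Finset.mem_Icc, le_min_iff] at hj
    simp only [Finset.mem_filter, Finset.mem_univ, true_and]
    omega
  · intro i hi
    simp only [Finset.mem_filter, Finset.mem_univ, true_and] at hi
    apply Fin.ext
    simp only
    omega
  · intro j hj
    simp only [Finset.mem_Icc, le_min_iff] at hj
    simp only
    omega
  · intro i hi
    simp only [Finset.mem_filter, Finset.mem_univ, true_and] at hi
    have h : (⟨m.val - (m.val - i.val),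
        Nat.lt_of_le_of_lt (Nat.sub_le _ _) m.isLt⟩ : Fin (k+1)) = i :=
      Fin.ext (by simp only; omega)
    rw [h]

lemma armaB_eq (k q : ℕ) (b : ℕ → ℝ) : armaB k q b = 1 + armaA k q b := by
  ext m i
  simp only [armaB, armaA, Matrix.of_apply, Matrix.add_apply, Matrix.one_apply]
  by_cases h : i = m
  · subst h; simp
  · simp [h, Ne.symm h]

lemma one_sub_armaA (k p : ℕ) (a : ℕ → ℝ) :
    1 - armaA k p a = 1 + armaA k p (fun j => -(a j)) := by
  ext m i
  simp only [armaA, Matrix.sub_apply, Matrix.add_apply, Matrix.of_apply, sub_eq_add_neg]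
  congr 1
  split_ifs <;> simp

lemma det_one_add_armaA (k r : ℕ) (c : ℕ → ℝ) : (1 + armaA k r c).det = 1 := by
  rw [Matrix.det_of_lowerTriangular]
  · have : ∀ i : Fin (k+1), (1 + armaA k r c) i i = 1 := by
      intro i
      simp [armaA, Matrix.one_apply]
    simp [this]
  · intro i j hij
    have hij' : i < j := hij
    have h1 : ¬ (j.val < i.val) := by
      have := Fin.lt_def.mp hij'
      omega
    have h2 : i ≠ j := ne_of_lt hij'
    simp [armaA, Matrix.one_apply, h1, h2]
    intro h
    exact absurd h (not_lt.2 hij'.le)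

/-- Theorem 2 (ARMA filter interpretation): for every `z ∈ ℝ^{k+1}`, the vector
`ẑ = L(k)⁻¹ z` satisfies the inverse ARMA recursion
`ẑ(m) = −∑_{j=1}^{min(m,q)} b(j) ẑ(m−j) + z(m)/σ − ∑_{j=1}^{min(m,p)} (a(j)/σ) z(m−j)`. -/
theorem arma_whitening_filter (k p q : ℕ) (a b : ℕ → ℝ) (σ : ℝ) (hσ : 0 < σ)
    (z : Fin (k + 1) → ℝ) :
    ∀ m : Fin (k + 1),
      (armaL k p q a b σ)⁻¹.mulVec z m =
        -(∑ j ∈ Finset.Icc 1 (min m.val q),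
            b j * (armaL k p q a b σ)⁻¹.mulVec z
              ⟨m.val - j, Nat.lt_of_le_of_lt (Nat.sub_le _ _) m.isLt⟩)
        + (1 / σ) * z m
        - ∑ j ∈ Finset.Icc 1 (min m.val p),
            (a j / σ) * z ⟨m.val - j, Nat.lt_of_le_of_lt (Nat.sub_le _ _) m.isLt⟩ := by
  intro m
  set A := armaA k p a with hA
  set B := armaB k q b with hB
  have hdetA : IsUnit (1 - A).det := by
    rw [hA, one_sub_armaA, det_one_add_armaA]; exact isUnit_one
  have hdetB : IsUnit B.det := by
    rw [hB, armaB_eq, det_one_add_armaA]; exact isUnit_one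
  have hσ' : σ ≠ 0 := ne_of_gt hσ
  have hinv : (armaL k p q a b σ)⁻¹ = σ⁻¹ • (B⁻¹ * (1 - A)) := by
    apply Matrix.inv_eq_right_inv
    rw [armaL]
    rw [Matrix.smul_mul, Matrix.mul_smul, smul_smul, mul_inv_cancel₀ hσ', one_smul]
    rw [Matrix.mul_assoc, ← Matrix.mul_assoc (armaB k q b), Matrix.mul_nonsing_inv _ hdetB,
      Matrix.one_mul, Matrix.nonsing_inv_mul _ hdetA]
  set w := (armaL k p q a b σ)⁻¹.mulVec z with hw
  have key : B.mulVec w = σ⁻¹ • (1 - A).mulVec z := by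
    rw [hw, hinv, Matrix.smul_mulVec, Matrix.mulVec_smul, Matrix.mulVec_mulVec,
      ← Matrix.mul_assoc, Matrix.mul_nonsing_inv _ hdetB, Matrix.one_mul]
  have keym := congrFun key m
  have hBrow : B.mulVec w m = w m + ∑ j ∈ Finset.Icc 1 (min m.val q),
      b j * w ⟨m.val - j, Nat.lt_of_le_of_lt (Nat.sub_le _ _) m.isLt⟩ := by
    rw [hB, armaB_eq, Matrix.add_mulVec, Matrix.one_mulVec, Pi.add_apply, armaA_mulVec]
  have hArow : (1 - A).mulVec z m = z m - ∑ j ∈ Finset.Icc 1 (min m.val p),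
      a j * z ⟨m.val - j, Nat.lt_of_le_of_lt (Nat.sub_le _ _) m.isLt⟩ := by
    rw [hA, Matrix.sub_mulVec, Matrix.one_mulVec, Pi.sub_apply, armaA_mulVec]
  rw [hBrow] at keym
  have keym' : w m + ∑ j ∈ Finset.Icc 1 (min m.val q),
      b j * w ⟨m.val - j, Nat.lt_of_le_of_lt (Nat.sub_le _ _) m.isLt⟩ =
      σ⁻¹ * (z m - ∑ j ∈ Finset.Icc 1 (min m.val p),
        a j * z ⟨m.val - j, Nat.lt_of_le_of_lt (Nat.sub_le _ _) m.isLt⟩) := by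
    rw [keym, Pi.smul_apply, hArow, smul_eq_mul]
  have hdist : σ⁻¹ * ∑ j ∈ Finset.Icc 1 (min m.val p),
      a j * z ⟨m.val - j, Nat.lt_of_le_of_lt (Nat.sub_le _ _) m.isLt⟩ =
      ∑ j ∈ Finset.Icc 1 (min m.val p),
      (a j / σ) * z ⟨m.val - j, Nat.lt_of_le_of_lt (Nat.sub_le _ _) m.isLt⟩ := by
    rw [Finset.mul_sum]
    refine Finset.sum_congr rfl fun j _ => ?_
    rw [div_eq_mul_inv]; ring
  have hfin : w m = -(∑ j ∈ Finset.Icc 1 (min m.val q),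
      b j * w ⟨m.val - j, Nat.lt_of_le_of_lt (Nat.sub_le _ _) m.isLt⟩)
      + σ⁻¹ * z m - σ⁻¹ * ∑ j ∈ Finset.Icc 1 (min m.val p),
        a j * z ⟨m.val - j, Nat.lt_of_le_of_lt (Nat.sub_le _ _) m.isLt⟩ := by
    rw [mul_sub] at keym'
    linarith [keym']
  rw [hdist] at hfin
  simpa only [one_div] using hfin
end

section
/- Let n ≥ 1 and let W be a symmetric n×n real matrix admitting an eigenvalue decomposition W = (1/n)·1·1ᵀ + S D Sᵀ, where S ∈ ℝ^{n×(n−1)} has orthonormal columns each orthogonal to the all-ones vector 1 (SᵀS = I, Sᵀ1 = 0) and D is diagonal with every diagonal entry of absolute value strictly less than 1. Let f: ℕ→ℝ be a time-scaling sequence (either f(k) = k+1 for all k, or f(k) = 1 for all k). Suppose u: ℕ→ℝⁿ is a sequence of entrywise non-negative vectors such that Σ_{m=0}^k 1ᵀu(m) = θ·f(k) + o(f(k)) as k→∞, for some θ > 0. Define v: ℕ→ℝⁿ by v(0) = u(0) and v(k+1) = W·v(k) + u(k+1). Then v(k)/f(k) → (θ/n)·1 as k→∞. -/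
open Matrix Filter Topology Finset


section NormHelpers

variable {n : ℕ}

private noncomputable def nrm (x : Fin n → ℝ) : ℝ :=
  ‖(WithLp.equiv 2 (Fin n → ℝ)).symm x‖

private lemma inner_eq_dot (x y : Fin n → ℝ) :
    (inner ℝ ((WithLp.equiv 2 (Fin n → ℝ)).symm x)
      ((WithLp.equiv 2 (Fin n → ℝ)).symm y) : ℝ) = x ⬝ᵥ y := by
  rw [PiLp.inner_apply]
  simp [dotProduct, RCLike.inner_apply, mul_comm]

private lemma nrm_sq (x : Fin n → ℝ) : nrm x ^ 2 = x ⬝ᵥ x := by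
  rw [nrm, ← real_inner_self_eq_norm_sq, inner_eq_dot]

private lemma nrm_nonneg (x : Fin n → ℝ) : 0 ≤ nrm x := norm_nonneg _

private lemma nrm_add_le (x y : Fin n → ℝ) : nrm (x + y) ≤ nrm x + nrm y := by
  rw [nrm, nrm, nrm, WithLp.equiv_symm_apply, WithLp.toLp_add]
  exact norm_add_le _ _

private lemma nrm_le_of_sq (x : Fin n → ℝ) (c : ℝ) (hc : 0 ≤ c)
    (h : x ⬝ᵥ x ≤ c ^ 2) : nrm x ≤ c := by
  have h1 : nrm x ^ 2 ≤ c ^ 2 := by rw [nrm_sq]; exact h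
  nlinarith [nrm_nonneg x]

private lemma entry_le_nrm (x : Fin n → ℝ) (i : Fin n) : |x i| ≤ nrm x := by
  have h1 : x i * x i ≤ x ⬝ᵥ x := by
    rw [dotProduct]
    exact Finset.single_le_sum (f := fun j => x j * x j)
      (fun j _ => mul_self_nonneg _) (Finset.mem_univ i)
  rw [← nrm_sq] at h1
  nlinarith [nrm_nonneg x, abs_nonneg (x i), sq_abs (x i)]

private lemma nrm_le_of_entries (x : Fin n → ℝ) (c : ℝ) (hc : 0 ≤ c)
    (h : ∀ i, |x i| ≤ c) : nrm x ≤ (n : ℝ) * c := by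
  apply nrm_le_of_sq _ _ (by positivity)
  rw [dotProduct]
  calc (∑ i, x i * x i) ≤ ∑ _i : Fin n, c ^ 2 := by
        apply Finset.sum_le_sum
        intro i _
        nlinarith [h i, abs_nonneg (x i), sq_abs (x i)]
    _ = (n : ℝ) * c ^ 2 := by simp [mul_comm]
    _ ≤ ((n : ℝ) * c) ^ 2 := by
        have hnn : (n : ℝ) ≤ (n : ℝ) ^ 2 := by
          exact_mod_cast Nat.le_self_pow two_ne_zero n
        nlinarith [sq_nonneg c]

end NormHelpers

private lemma contract_lemma {n : ℕ}
    (W : Matrix (Fin n) (Fin n) ℝ)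
    (S : Matrix (Fin n) (Fin (n - 1)) ℝ)
    (D : Matrix (Fin (n - 1)) (Fin (n - 1)) ℝ)
    (hD_diag : ∀ i j : Fin (n - 1), i ≠ j → D i j = 0)
    (hS_orth : Sᵀ * S = 1)
    (hW : W = (n : ℝ)⁻¹ • Matrix.of (fun _ _ => (1 : ℝ)) + S * D * Sᵀ)
    (ρ : ℝ) (hρD : ∀ i, |D i i| ≤ ρ)
    (x : Fin n → ℝ) (hx : ∑ i, x i = 0) :
    (W.mulVec x) ⬝ᵥ (W.mulVec x) ≤ ρ ^ 2 * (x ⬝ᵥ x) := by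
  have hJ : (Matrix.of (fun _ _ => (1 : ℝ)) : Matrix (Fin n) (Fin n) ℝ).mulVec x = 0 := by
    funext i
    simp only [Matrix.mulVec, dotProduct, Matrix.of_apply, one_mul]
    simpa using hx
  have hWx : W.mulVec x = S.mulVec (D.mulVec (Sᵀ.mulVec x)) := by
    rw [hW, Matrix.add_mulVec, Matrix.smul_mulVec, hJ, smul_zero, zero_add,
      ← Matrix.mulVec_mulVec, ← Matrix.mulVec_mulVec]
  set y : Fin (n-1) → ℝ := Sᵀ.mulVec x with hy
  set z : Fin (n-1) → ℝ := D.mulVec y with hz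
  -- step 1 : ‖Sz‖² = ‖z‖²
  have hvm : ∀ w : Fin n → ℝ, w ᵥ* S = Sᵀ.mulVec w := fun w =>
    (Matrix.mulVec_transpose S w).symm
  have step1 : (S.mulVec z) ⬝ᵥ (S.mulVec z) = z ⬝ᵥ z := by
    rw [Matrix.dotProduct_mulVec, hvm, Matrix.mulVec_mulVec, hS_orth, Matrix.one_mulVec]
  -- step 2 : ‖z‖² ≤ ρ² ‖y‖²
  have hzi : ∀ i, z i = D i i * y i := by
    intro i
    rw [hz]
    simp only [Matrix.mulVec, dotProduct]
    rw [Finset.sum_eq_single i]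
    · intro j _ hji
      rw [hD_diag i j (Ne.symm hji), zero_mul]
    · intro h
      exact absurd (Finset.mem_univ i) h
  have step2 : z ⬝ᵥ z ≤ ρ ^ 2 * (y ⬝ᵥ y) := by
    simp only [dotProduct]
    rw [Finset.mul_sum]
    apply Finset.sum_le_sum
    intro i _
    rw [hzi i]
    have h1 : |D i i| ^ 2 ≤ ρ ^ 2 := by
      have := hρD i
      nlinarith [abs_nonneg (D i i)]
    nlinarith [sq_abs (D i i), sq_nonneg (y i), sq_nonneg (D i i * y i)]
  -- step 3 : ‖y‖² ≤ ‖x‖²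
  have step3 : y ⬝ᵥ y ≤ x ⬝ᵥ x := by
    set P : Fin n → ℝ := S.mulVec y with hP
    have hxP : x ⬝ᵥ P = y ⬝ᵥ y := by
      rw [hP, Matrix.dotProduct_mulVec, hvm, ← hy]
    have hPx : P ⬝ᵥ x = y ⬝ᵥ y := by rw [dotProduct_comm]; exact hxP
    have hPP : P ⬝ᵥ P = y ⬝ᵥ y := by
      rw [hP, Matrix.dotProduct_mulVec, hvm, Matrix.mulVec_mulVec, hS_orth,
        Matrix.one_mulVec]
    have hnn : 0 ≤ (x - P) ⬝ᵥ (x - P) := by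
      simp only [dotProduct, Pi.sub_apply]
      exact Finset.sum_nonneg fun i _ => mul_self_nonneg _
    rw [sub_dotProduct, dotProduct_sub, dotProduct_sub] at hnn
    linarith [hxP, hPx, hPP, hnn]
  rw [hWx, step1]
  calc z ⬝ᵥ z ≤ ρ ^ 2 * (y ⬝ᵥ y) := step2
    _ ≤ ρ ^ 2 * (x ⬝ᵥ x) := by
        apply mul_le_mul_of_nonneg_left step3 (sq_nonneg ρ)


private lemma aux_window (A : ℕ → ℝ) (f : ℕ → ℝ)
    (hf : (∀ k, f k = (k : ℝ) + 1) ∨ (∀ k, f k = 1)) (θ : ℝ) (hθ : 0 ≤ θ)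
    (hA : Tendsto (fun k => A (k + 1) / f k) atTop (𝓝 θ))
    (T : ℕ) {ε : ℝ} (hε : 0 < ε) :
    ∀ᶠ k in atTop, A (k + 1) - A (k - T) ≤ ε * f k := by
  rcases hf with hf | hf
  · -- f k = k + 1
    have hδ : (0:ℝ) < ε / 4 := by linarith
    obtain ⟨K, hK⟩ := Metric.tendsto_atTop.1 hA (ε / 4) hδ
    have hfK : ∀ k ≥ K, |A (k + 1) / ((k:ℝ) + 1) - θ| < ε / 4 := by
      intro k hk
      have := hK k hk
      rwa [Real.dist_eq, hf k] at this
    have hlarge : ∀ᶠ k : ℕ in atTop, θ * ((T:ℝ) + 1) ≤ (ε / 4) * ((k:ℝ) + 1) := by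
      have ht : Tendsto (fun k : ℕ => (ε / 4) * ((k:ℝ) + 1)) atTop atTop := by
        apply Tendsto.const_mul_atTop (by linarith : (0:ℝ) < ε/4)
        exact tendsto_atTop_add_const_right _ _ tendsto_natCast_atTop_atTop
      exact ht.eventually_ge_atTop _
    filter_upwards [hlarge, eventually_ge_atTop (K + T + 1)] with k hk1 hk2
    rw [hf k]
    have hkK : k ≥ K := by omega
    have hkT : T + 1 ≤ k := by omega
    have hjK : k - T - 1 ≥ K := by omega
    have hkpos : (0:ℝ) < (k:ℝ) + 1 := by positivity
    have h1 := (abs_lt.1 (hfK k hkK)).2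
    have hup : A (k + 1) ≤ (θ + ε/4) * ((k:ℝ) + 1) := by
      have := (div_lt_iff₀ hkpos).1 (by linarith : A (k+1) / ((k:ℝ)+1) < θ + ε/4)
      linarith
    set j := k - T - 1 with hj
    have hjpos : (0:ℝ) < (j:ℝ) + 1 := by positivity
    have h2 := (abs_lt.1 (hfK j hjK)).1
    have hlo : (θ - ε/4) * ((j:ℝ) + 1) ≤ A (j + 1) := by
      have := (lt_div_iff₀ hjpos).1 (by linarith : θ - ε/4 < A (j+1) / ((j:ℝ)+1))
      linarith
    have hidx : j + 1 = k - T := by omega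
    have hcast : ((j:ℝ) + 1) = (k:ℝ) - T := by
      have : (j:ℕ) = k - (T + 1) := by omega
      rw [this]
      push_cast [Nat.cast_sub hkT]
      ring
    rw [hidx] at hlo
    rw [hcast] at hlo hjpos
    nlinarith [hlo, hup, hk1, hjpos]
  · -- f k = 1
    have h1 : Tendsto (fun k => A (k + 1)) atTop (𝓝 θ) := by
      simpa [hf] using hA
    have h2 : Tendsto (fun k => A (k - T)) atTop (𝓝 θ) := by
      have := h1.comp (tendsto_sub_atTop_nat (T + 1))
      apply this.congr'
      filter_upwards [eventually_ge_atTop (T + 1)] with k hk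
      simp only [Function.comp_apply]
      congr 1
      omega
    have h3 : Tendsto (fun k => A (k + 1) - A (k - T)) atTop (𝓝 0) := by
      simpa using h1.sub h2
    have := (h3.eventually (eventually_le_nhds (by linarith : (0:ℝ) < ε)))
    filter_upwards [this] with k hk
    rw [hf k]
    linarith

private lemma aux_key (a : ℕ → ℝ) (ha : ∀ m, 0 ≤ a m)
    (ρ : ℝ) (hρ0 : 0 ≤ ρ) (hρ1 : ρ < 1)
    (f : ℕ → ℝ) (hf : (∀ k, f k = (k : ℝ) + 1) ∨ (∀ k, f k = 1))
    (θ : ℝ) (hθ : 0 ≤ θ)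
    (hA : Tendsto (fun k => (∑ m ∈ Finset.range (k + 1), a m) / f k) atTop (𝓝 θ)) :
    Tendsto (fun k => (∑ m ∈ Finset.range (k + 1), ρ ^ (k - m) * a m) / f k)
      atTop (𝓝 0) := by
  set A : ℕ → ℝ := fun j => ∑ m ∈ Finset.range j, a m with hAdef
  have hfpos : ∀ k, (0:ℝ) < f k := by
    rcases hf with hf | hf <;> intro k <;> rw [hf k] <;> positivity
  have hAmono : Monotone A := by
    intro i j hij
    exact Finset.sum_le_sum_of_subset_of_nonneg (Finset.range_subset_range.2 hij)
      (fun m _ _ => ha m)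
  have hfmono : Monotone f := by
    rcases hf with hf | hf <;> intro i j hij <;> simp only [hf]
    · have : (i:ℝ) ≤ j := by exact_mod_cast hij
      linarith
    · exact le_refl _
  -- a uniform linear bound on A
  obtain ⟨C₀, hC₀⟩ := (hA.bddAbove_range).exists_ge 0
  set C : ℝ := max C₀ 1 with hC
  have hC1 : (1:ℝ) ≤ C := le_max_right _ _
  have hCpos : (0:ℝ) < C := lt_of_lt_of_le one_pos hC1
  have hAC : ∀ k, A (k + 1) ≤ C * f k := by
    intro k
    have h1 : A (k + 1) / f k ≤ C₀ := hC₀.2 _ (Set.mem_range_self k)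
    have h2 : A (k + 1) / f k ≤ C := le_trans h1 (le_max_left C₀ 1)
    have := (div_le_iff₀ (hfpos k)).1 h2
    linarith [this]
  rw [NormedAddCommGroup.tendsto_nhds_zero]
  intro ε hε
  -- choose T with C * ρ^(T+1) ≤ ε/4
  obtain ⟨T, hT⟩ : ∃ T : ℕ, C * ρ ^ (T + 1) ≤ ε / 4 := by
    have h := tendsto_pow_atTop_nhds_zero_of_lt_one hρ0 hρ1
    have h2 : Tendsto (fun T : ℕ => C * ρ ^ T) atTop (𝓝 0) := by
      simpa using h.const_mul C
    obtain ⟨T, hT⟩ := (h2.eventually (eventually_le_nhds (by linarith : (0:ℝ) < ε/4))).exists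
    refine ⟨T, ?_⟩
    have hpw : ρ ^ (T + 1) ≤ ρ ^ T := pow_le_pow_of_le_one hρ0 hρ1.le (by omega)
    nlinarith [pow_nonneg hρ0 (T + 1)]
  have hwin := aux_window A f hf θ hθ hA T (by linarith : (0:ℝ) < ε/4)
  filter_upwards [hwin] with k hwk
  have hsplit : ∑ m ∈ Finset.range (k + 1), ρ ^ (k - m) * a m
      = (∑ m ∈ Finset.range (k - T), ρ ^ (k - m) * a m)
      + ∑ m ∈ Finset.Ico (k - T) (k + 1), ρ ^ (k - m) * a m := by
    rw [Finset.sum_range_add_sum_Ico _ (by omega : k - T ≤ k + 1)]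
  have hfirst : (∑ m ∈ Finset.range (k - T), ρ ^ (k - m) * a m)
      ≤ ρ ^ (T + 1) * A (k - T) := by
    rw [hAdef, Finset.mul_sum]
    apply Finset.sum_le_sum
    intro m hm
    have hm' : m < k - T := Finset.mem_range.1 hm
    have : ρ ^ (k - m) ≤ ρ ^ (T + 1) :=
      pow_le_pow_of_le_one hρ0 (le_of_lt hρ1) (by omega)
    exact mul_le_mul_of_nonneg_right this (ha m)
  have hsecond : (∑ m ∈ Finset.Ico (k - T) (k + 1), ρ ^ (k - m) * a m)
      ≤ A (k + 1) - A (k - T) := by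
    have : (∑ m ∈ Finset.Ico (k - T) (k + 1), ρ ^ (k - m) * a m)
        ≤ ∑ m ∈ Finset.Ico (k - T) (k + 1), a m := by
      apply Finset.sum_le_sum
      intro m hm
      have h1 : ρ ^ (k - m) ≤ 1 := pow_le_one₀ hρ0 (le_of_lt hρ1)
      nlinarith [ha m, pow_nonneg hρ0 (k - m)]
    calc (∑ m ∈ Finset.Ico (k - T) (k + 1), ρ ^ (k - m) * a m)
        ≤ ∑ m ∈ Finset.Ico (k - T) (k + 1), a m := this
      _ = A (k + 1) - A (k - T) := by
          rw [hAdef, Finset.sum_Ico_eq_sub a (by omega : k - T ≤ k + 1)]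
  have hAkT : A (k - T) ≤ C * f k := le_trans (hAmono (by omega)) (hAC k)
  have hb_nonneg : 0 ≤ ∑ m ∈ Finset.range (k + 1), ρ ^ (k - m) * a m :=
    Finset.sum_nonneg fun m _ => mul_nonneg (pow_nonneg hρ0 _) (ha m)
  have hbound : (∑ m ∈ Finset.range (k + 1), ρ ^ (k - m) * a m) ≤ (ε/2) * f k := by
    have hp : 0 ≤ ρ ^ (T+1) := pow_nonneg hρ0 _
    have h1 : ρ ^ (T + 1) * A (k - T) ≤ (ε/4) * f k := by
      calc ρ ^ (T + 1) * A (k - T) ≤ ρ ^ (T + 1) * (C * f k) :=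
            mul_le_mul_of_nonneg_left hAkT hp
        _ = (C * ρ ^ (T+1)) * f k := by ring
        _ ≤ (ε/4) * f k := mul_le_mul_of_nonneg_right hT (le_of_lt (hfpos k))
    rw [hsplit]
    linarith
  rw [Real.norm_eq_abs, abs_div, abs_of_nonneg hb_nonneg,
    abs_of_pos (hfpos k), div_lt_iff₀ (hfpos k)]
  have := hfpos k
  nlinarith

/-- Lemma 1: for a symmetric weight matrix `W` with eigenvalue decomposition
`W = (1/n)·𝟙𝟙ᵀ + S D Sᵀ` (with `SᵀS = I`, `Sᵀ𝟙 = 0`, `D` diagonal with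
`|d_j| < 1`), if the non-negative inputs `u(k)` satisfy
`∑_{m=0}^k 𝟙ᵀ u(m) = θ f(k) + o(f(k))` for a time-scaling `f` (either
`f(k) = k+1` or `f(k) = 1`), then the recursion `v(k+1) = W v(k) + u(k+1)`,
`v(0) = u(0)`, satisfies `v(k)/f(k) → (θ/n)·𝟙`. -/
theorem running_consensus_limit (n : ℕ) (hn : 1 ≤ n)
    (W : Matrix (Fin n) (Fin n) ℝ) (hWsymm : W.IsSymm)
    (S : Matrix (Fin n) (Fin (n - 1)) ℝ)
    (D : Matrix (Fin (n - 1)) (Fin (n - 1)) ℝ)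
    (hD_diag : ∀ i j : Fin (n - 1), i ≠ j → D i j = 0)
    (hD_lt : ∀ i : Fin (n - 1), |D i i| < 1)
    (hS_orth : Sᵀ * S = 1)
    (hS_ones : Sᵀ.mulVec (fun _ => (1 : ℝ)) = 0)
    (hW : W = (n : ℝ)⁻¹ • Matrix.of (fun _ _ => (1 : ℝ)) + S * D * Sᵀ)
    (f : ℕ → ℝ) (hf : (∀ k, f k = (k : ℝ) + 1) ∨ (∀ k, f k = 1))
    (u : ℕ → Fin n → ℝ) (hu_nonneg : ∀ k i, 0 ≤ u k i)
    (θ : ℝ) (hθ : 0 < θ)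
    (hgrowth : Tendsto
      (fun k => ((∑ m ∈ Finset.range (k + 1), ∑ i, u m i) - θ * f k) / f k)
      atTop (𝓝 0))
    (v : ℕ → Fin n → ℝ) (hv0 : v 0 = u 0)
    (hvrec : ∀ k : ℕ, v (k + 1) = W.mulVec (v k) + u (k + 1)) :
    ∀ i : Fin n, Tendsto (fun k => v k i / f k) atTop (𝓝 (θ / n)) := by
  have hnpos : (0:ℝ) < n := by exact_mod_cast hn
  have hone : (1:ℝ) ≤ (n:ℝ) := by exact_mod_cast hn
  have hn0 : (n:ℝ) ≠ 0 := ne_of_gt hnpos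
  have hfpos : ∀ k, (0:ℝ) < f k := by
    rcases hf with hf | hf <;> intro k <;> rw [hf k] <;> positivity
  -- spectral radius bound
  obtain ⟨ρ, hρ0, hρ1, hρD⟩ :
      ∃ ρ : ℝ, 0 ≤ ρ ∧ ρ < 1 ∧ ∀ i : Fin (n-1), |D i i| ≤ ρ := by
    rcases isEmpty_or_nonempty (Fin (n-1)) with he | he
    · exact ⟨0, le_refl 0, one_pos, fun i => (he.false i).elim⟩
    · refine ⟨Finset.univ.sup' Finset.univ_nonempty (fun i => |D i i|), ?_, ?_, ?_⟩
      · exact le_trans (abs_nonneg _)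
          (Finset.le_sup' (fun i => |D i i|) (Finset.mem_univ he.some))
      · exact (Finset.sup'_lt_iff _).2 fun i _ => hD_lt i
      · exact fun i => Finset.le_sup' (fun i => |D i i|) (Finset.mem_univ i)
  set a : ℕ → ℝ := fun k => ∑ i, u k i with hadef
  have ha : ∀ k, 0 ≤ a k := fun k => Finset.sum_nonneg fun i _ => hu_nonneg k i
  set A : ℕ → ℝ := fun k => ∑ m ∈ Finset.range (k + 1), a m with hAdef
  have hAtend : Tendsto (fun k => A k / f k) atTop (𝓝 θ) := by
    have h1 : Tendsto (fun k => A k / f k - θ) atTop (𝓝 0) := by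
      apply hgrowth.congr
      intro k
      rw [sub_div, mul_div_assoc, div_self (ne_of_gt (hfpos k)), mul_one]
    have := h1.add_const θ
    simpa using this
  -- W preserves the all-ones vector
  have hW1 : W.mulVec (fun _ => (1:ℝ)) = fun _ => (1:ℝ) := by
    rw [hW, Matrix.add_mulVec, Matrix.smul_mulVec,
      ← Matrix.mulVec_mulVec, ← Matrix.mulVec_mulVec, hS_ones,
      Matrix.mulVec_zero, Matrix.mulVec_zero, add_zero]
    funext i
    simp only [Matrix.mulVec, dotProduct, Matrix.of_apply, one_mul,
      Pi.smul_apply, Finset.sum_const, Finset.card_univ, Fintype.card_fin,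
      nsmul_eq_mul, mul_one, smul_eq_mul]
    field_simp
  -- W preserves coordinate sums
  have hsum : ∀ x : Fin n → ℝ, ∑ i, (W.mulVec x) i = ∑ i, x i := by
    intro x
    have h1 : (fun _ => (1:ℝ)) ⬝ᵥ (W.mulVec x) = ((fun _ => (1:ℝ)) ᵥ* W) ⬝ᵥ x :=
      Matrix.dotProduct_mulVec _ _ _
    have h2 : (fun _ => (1:ℝ)) ᵥ* W = fun _ => (1:ℝ) := by
      rw [← Matrix.mulVec_transpose, hWsymm.eq, hW1]
    rw [h2] at h1
    simpa [dotProduct] using h1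
  have hsA : ∀ k, ∑ i, v k i = A k := by
    intro k
    induction k with
    | zero => simp [hv0, hAdef, hadef]
    | succ k ih =>
      rw [hvrec k]
      simp only [Pi.add_apply, Finset.sum_add_distrib, hsum, ih]
      rw [hAdef]
      simp [Finset.sum_range_succ, hadef]
  -- centered sequence
  set w : ℕ → Fin n → ℝ :=
    fun k => v k - (A k / (n:ℝ)) • (fun _ => (1:ℝ)) with hwdef
  have hwapp : ∀ k i, w k i = v k i - A k / (n:ℝ) := by
    intro k i; simp [hwdef]
  have hwsum : ∀ k, ∑ i, w k i = 0 := by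
    intro k
    simp only [hwapp, Finset.sum_sub_distrib, hsA k, Finset.sum_const,
      Finset.card_univ, Fintype.card_fin, nsmul_eq_mul]
    field_simp
    simp
  set b : ℕ → ℝ := fun k => ∑ m ∈ Finset.range (k + 1), ρ ^ (k - m) * a m with hbdef
  have hbrec : ∀ k, b (k + 1) = ρ * b k + a (k + 1) := by
    intro k
    rw [hbdef]
    simp only
    rw [Finset.sum_range_succ, Nat.sub_self, pow_zero, one_mul]
    congr 1
    rw [Finset.mul_sum]
    apply Finset.sum_congr rfl
    intro m hm
    have hm' : m < k + 1 := Finset.mem_range.1 hm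
    have : k + 1 - m = (k - m) + 1 := by omega
    rw [this, pow_succ]
    ring
  -- norm recursion
  have hbound_r : ∀ k, nrm (u k - (a k / (n:ℝ)) • (fun _ => (1:ℝ))) ≤ (n:ℝ) * a k := by
    intro k
    apply nrm_le_of_entries _ _ (ha k)
    intro i
    have h1 : u k i ≤ a k :=
      Finset.single_le_sum (f := fun j => u k j) (fun j _ => hu_nonneg k j)
        (Finset.mem_univ i)
    have h2 : 0 ≤ a k / (n:ℝ) := div_nonneg (ha k) hnpos.le
    have h3 : a k / (n:ℝ) ≤ a k := by
      rw [div_le_iff₀ hnpos]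
      nlinarith [ha k, hone]
    simp only [Pi.sub_apply, Pi.smul_apply, smul_eq_mul, mul_one]
    rw [abs_le]
    constructor <;> nlinarith [hu_nonneg k i]
  have hwrec : ∀ k, w (k + 1)
      = W.mulVec (w k) + (u (k+1) - (a (k+1) / (n:ℝ)) • (fun _ => (1:ℝ))) := by
    intro k
    have h1 : W.mulVec (w k)
        = W.mulVec (v k) - (A k / (n:ℝ)) • (fun _ => (1:ℝ)) := by
      rw [hwdef]
      simp only
      rw [Matrix.mulVec_sub, Matrix.mulVec_smul, hW1]
    funext i
    simp only [hwapp, h1, Pi.add_apply, Pi.sub_apply, Pi.smul_apply,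
      smul_eq_mul, mul_one, hvrec k]
    have hAk : A (k+1) = A k + a (k+1) := by
      rw [hAdef]; simp [Finset.sum_range_succ]
    rw [hAk]
    ring
  have hg : ∀ k, nrm (w k) ≤ (n:ℝ) * b k := by
    intro k
    induction k with
    | zero =>
      have hw0 : w 0 = u 0 - (a 0 / (n:ℝ)) • (fun _ => (1:ℝ)) := by
        funext i
        rw [hwapp]
        simp [hv0, hAdef]
      rw [hw0]
      have hb0 : b 0 = a 0 := by simp [hbdef]
      rw [hb0]
      exact hbound_r 0
    | succ k ih =>
      have hWw : nrm (W.mulVec (w k)) ≤ ρ * nrm (w k) := by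
        apply nrm_le_of_sq _ _ (mul_nonneg hρ0 (nrm_nonneg _))
        have := contract_lemma W S D hD_diag hS_orth hW ρ hρD (w k) (hwsum k)
        calc (W.mulVec (w k)) ⬝ᵥ (W.mulVec (w k)) ≤ ρ^2 * ((w k) ⬝ᵥ (w k)) := this
          _ = (ρ * nrm (w k))^2 := by rw [← nrm_sq]; ring
      calc nrm (w (k+1))
          ≤ nrm (W.mulVec (w k))
            + nrm (u (k+1) - (a (k+1) / (n:ℝ)) • (fun _ => (1:ℝ))) := by
            rw [hwrec k]; exact nrm_add_le _ _
        _ ≤ ρ * nrm (w k) + (n:ℝ) * a (k+1) := add_le_add hWw (hbound_r (k+1))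
        _ ≤ ρ * ((n:ℝ) * b k) + (n:ℝ) * a (k+1) := by
            have := mul_le_mul_of_nonneg_left ih hρ0
            linarith
        _ = (n:ℝ) * b (k+1) := by rw [hbrec k]; ring
  -- conclusion
  have hbtend : Tendsto (fun k => b k / f k) atTop (𝓝 0) :=
    aux_key a ha ρ hρ0 hρ1 f hf θ hθ.le hAtend
  intro i
  have h2 : Tendsto (fun k => w k i / f k) atTop (𝓝 0) := by
    refine squeeze_zero_norm (a := fun k => (n:ℝ) * (b k / f k)) ?_
      (by simpa using hbtend.const_mul (n:ℝ))
    intro k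
    have h3 : |w k i| ≤ (n:ℝ) * b k := le_trans (entry_le_nrm (w k) i) (hg k)
    show ‖w k i / f k‖ ≤ (n:ℝ) * (b k / f k)
    rw [Real.norm_eq_abs, abs_div, abs_of_pos (hfpos k), ← mul_div_assoc]
    exact (div_le_div_iff_of_pos_right (hfpos k)).2 h3
  have h3 : Tendsto (fun k => (A k / f k) / (n:ℝ)) atTop (𝓝 (θ / n)) :=
    hAtend.div_const _
  have heq : (fun k => v k i / f k)
      = fun k => w k i / f k + (A k / f k) / (n:ℝ) := by
    funext k
    rw [hwapp, sub_div, div_right_comm]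
    ring
  rw [heq]
  simpa using h2.add h3
end

section
/- Let d be a real number with |d| < 1, let f: ℕ→ℝ be a positive non-decreasing sequence, and let (w(k))_{k≥0} be a real sequence with w(k)/f(k) → 0. Define x(0) = w(0) and x(k) = d·x(k−1) + w(k) for k ≥ 1. Then x(k)/f(k) → 0 as k→∞. -/
open Filter Topology

/-- If `|d| < 1`, `f` is positive and non-decreasing, and `w(k)/f(k) → 0`, then the
recursion `x(0) = w(0)`, `x(k) = d·x(k−1) + w(k)` satisfies `x(k)/f(k) → 0`. -/
theorem damped_recursion_scaled_to_zero (d : ℝ) (hd : |d| < 1)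
    (f : ℕ → ℝ) (hf_pos : ∀ k, 0 < f k)
    (hf_mono : ∀ k : ℕ, 1 ≤ k → f (k - 1) ≤ f k)
    (w : ℕ → ℝ) (hw : Tendsto (fun k => w k / f k) atTop (𝓝 0))
    (x : ℕ → ℝ) (hx0 : x 0 = w 0)
    (hxrec : ∀ k : ℕ, 1 ≤ k → x k = d * x (k - 1) + w k) :
    Tendsto (fun k => x k / f k) atTop (𝓝 0) := by
  set D := |d| with hDdef
  have hD0 : 0 ≤ D := abs_nonneg d
  have hD1 : 0 < 1 - D := by linarith
  -- key pointwise bound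
  have key : ∀ k : ℕ, 1 ≤ k → |x k / f k| ≤ D * |x (k - 1) / f (k - 1)| + |w k / f k| := by
    intro k hk
    have hfk := hf_pos k
    have hfk1 := hf_pos (k - 1)
    have h1 : x k / f k = d * (x (k - 1) / f k) + w k / f k := by
      rw [hxrec k hk]; ring
    have e1 : |d * (x (k - 1) / f k)| = D * (|x (k - 1)| / f k) := by
      rw [abs_mul, abs_div, abs_of_pos hfk]
    have e2 : |x (k - 1) / f (k - 1)| = |x (k - 1)| / f (k - 1) := by
      rw [abs_div, abs_of_pos hfk1]
    calc |x k / f k| ≤ |d * (x (k - 1) / f k)| + |w k / f k| := by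
          rw [h1]; exact abs_add_le _ _
      _ = D * (|x (k - 1)| / f k) + |w k / f k| := by rw [e1]
      _ ≤ D * (|x (k - 1)| / f (k - 1)) + |w k / f k| := by
          gcongr
          exact hf_mono k hk
      _ = D * |x (k - 1) / f (k - 1)| + |w k / f k| := by rw [e2]
  rw [NormedAddCommGroup.tendsto_nhds_zero] at hw ⊢
  intro ε hε
  have hε' : 0 < ε * (1 - D) / 2 := by positivity
  obtain ⟨N, hN⟩ := Filter.eventually_atTop.mp (hw _ hε')
  -- inductive geometric bound
  have bound : ∀ m : ℕ, |x (N + m) / f (N + m)| ≤ D ^ m * |x N / f N| + ε / 2 := by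
    intro m
    induction m with
    | zero => simp; linarith
    | succ m ih =>
      have hk1 : 1 ≤ N + (m + 1) := by omega
      have hsub : N + (m + 1) - 1 = N + m := by omega
      have hwb : ‖w (N + (m + 1)) / f (N + (m + 1))‖ ≤ ε * (1 - D) / 2 :=
        le_of_lt (hN _ (by omega))
      have := key (N + (m + 1)) hk1
      rw [hsub] at this
      calc |x (N + (m + 1)) / f (N + (m + 1))|
          ≤ D * |x (N + m) / f (N + m)| + |w (N + (m + 1)) / f (N + (m + 1))| := this
        _ ≤ D * (D ^ m * |x N / f N| + ε / 2) + ε * (1 - D) / 2 := by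
            have : |w (N + (m + 1)) / f (N + (m + 1))| ≤ ε * (1 - D) / 2 := hwb
            gcongr
        _ ≤ D ^ (m + 1) * |x N / f N| + ε / 2 := by
            have h4 : D * (D ^ m * |x N / f N| + ε / 2) + ε * (1 - D) / 2
                = D ^ (m + 1) * |x N / f N| + ε / 2 := by ring
            linarith
  -- geometric term tends to 0
  have hgeo : Tendsto (fun m : ℕ => D ^ m * |x N / f N|) atTop (𝓝 0) := by
    have := tendsto_pow_atTop_nhds_zero_of_lt_one hD0 hd
    simpa using this.mul_const |x N / f N|
  rw [NormedAddCommGroup.tendsto_nhds_zero] at hgeo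
  obtain ⟨M, hM⟩ := Filter.eventually_atTop.mp (hgeo (ε / 2) (by linarith))
  refine Filter.eventually_atTop.mpr ⟨N + M, fun k hk => ?_⟩
  have hkN : N ≤ k := by omega
  have hrepr : k = N + (k - N) := by omega
  have h1 := bound (k - N)
  rw [← hrepr] at h1
  have h2 : ‖D ^ (k - N) * |x N / f N|‖ < ε / 2 := hM _ (by omega)
  rw [Real.norm_eq_abs, abs_of_nonneg (by positivity)] at h2
  have hfin : |x k / f k| < ε := lt_of_le_of_lt h1 (by linarith)
  simpa [Real.norm_eq_abs, abs_div] using hfin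
end

section
/- Let N ≥ 1 and let W be a symmetric N×N real matrix admitting an eigenvalue decomposition W = (1/N)·1·1ᵀ + S D Sᵀ, where S ∈ ℝ^{N×(N−1)} has orthonormal columns each orthogonal to the all-ones vector 1 (SᵀS = I, Sᵀ1 = 0) and D is diagonal with every diagonal entry of absolute value strictly less than 1. Let f: ℕ→ℝ be a time-scaling sequence (either f(k) = k+1 for all k, or f(k) = 1 for all k) and suppose θ̂: ℕ→ℝᴺ satisfies Σ_{m=0}^k ‖θ̂(m)‖² = α·f(k) + o(f(k)) for some α > 0, where ‖·‖ is the Euclidean norm. Define μ: ℕ→ℝᴺ by μ(0) = (1/2)·θ̂(0)⊙θ̂(0) and μ(k+1) = W·μ(k) + (1/2)·θ̂(k+1)⊙θ̂(k+1), where ⊙ denotes the entrywise product. Then μ(k)/f(k) → (α/(2N))·1 as k→∞. -/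
open Matrix Filter Topology Finset


noncomputable def enorm' {n : ℕ} (v : Fin n → ℝ) : ℝ := ‖(WithLp.equiv 2 (Fin n → ℝ)).symm v‖

theorem enorm'_eq {n : ℕ} (v : Fin n → ℝ) : enorm' v = Real.sqrt (∑ i, v i ^ 2) := by
  rw [enorm', EuclideanSpace.norm_eq]
  congr 1
  exact Finset.sum_congr rfl fun i _ => by rw [Real.norm_eq_abs, sq_abs]; rfl

theorem enorm'_nonneg {n : ℕ} (v : Fin n → ℝ) : 0 ≤ enorm' v := norm_nonneg _

theorem enorm'_sq {n : ℕ} (v : Fin n → ℝ) : enorm' v ^ 2 = ∑ i, v i ^ 2 := by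
  rw [enorm'_eq, Real.sq_sqrt (Finset.sum_nonneg fun i _ => sq_nonneg _)]

theorem enorm'_add_le {n : ℕ} (v w : Fin n → ℝ) : enorm' (v + w) ≤ enorm' v + enorm' w := by
  unfold enorm'
  rw [show (WithLp.equiv 2 (Fin n → ℝ)).symm (v + w)
    = (WithLp.equiv 2 (Fin n → ℝ)).symm v + (WithLp.equiv 2 (Fin n → ℝ)).symm w from rfl]
  exact norm_add_le _ _

theorem enorm'_coord {n : ℕ} (v : Fin n → ℝ) (i : Fin n) : |v i| ≤ enorm' v := by
  rw [enorm'_eq, ← Real.sqrt_sq_eq_abs]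
  exact Real.sqrt_le_sqrt (Finset.single_le_sum (fun j _ => sq_nonneg (v j)) (Finset.mem_univ i))

theorem enorm'_le_sum_abs {n : ℕ} (v : Fin n → ℝ) : enorm' v ≤ ∑ i, |v i| := by
  rw [enorm'_eq]
  rw [show (∑ i, |v i|) = Real.sqrt ((∑ i, |v i|)^2) from
    (Real.sqrt_sq (Finset.sum_nonneg fun i _ => abs_nonneg _)).symm]
  apply Real.sqrt_le_sqrt
  calc ∑ i, v i ^2 = ∑ i, |v i|^2 := by simp [sq_abs]
    _ ≤ (∑ i, |v i|)^2 := Finset.sum_sq_le_sq_sum_of_nonneg (fun i _ => abs_nonneg _)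

theorem enorm'_le_of_sq_le {n : ℕ} (v : Fin n → ℝ) (c : ℝ) (hc : 0 ≤ c)
    (h : ∑ i, v i ^ 2 ≤ c ^ 2) : enorm' v ≤ c := by
  rw [enorm'_eq]
  calc Real.sqrt (∑ i, v i ^ 2) ≤ Real.sqrt (c^2) := Real.sqrt_le_sqrt h
    _ = c := Real.sqrt_sq hc

theorem geom_bd (ρ:ℝ)(h0:0≤ρ)(h1:ρ<1)(n:ℕ): ∑ i ∈ range n, ρ^i ≤ 1/(1-ρ) := by
  rw [geom_sum_eq (ne_of_lt h1), ← neg_sub, ← neg_sub (1:ℝ) ρ, neg_div_neg_eq,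
    div_le_div_iff₀ (by linarith) (by linarith)]
  nlinarith [pow_nonneg h0 n]

theorem conv_lemma (ρ : ℝ) (h0 : 0 ≤ ρ) (h1 : ρ < 1) (f g : ℕ → ℝ)
    (hf1 : ∀ k, 1 ≤ f k) (hfmono : Monotone f) (hg : ∀ m, 0 ≤ g m)
    (hgf : Tendsto (fun m => g m / f m) atTop (𝓝 0)) :
    Tendsto (fun k => (∑ m ∈ range (k+1), ρ^(k-m) * g m) / f k) atTop (𝓝 0) := by
  rw [Metric.tendsto_atTop]
  intro ε hε
  have h1ρ : 0 < 1 - ρ := by linarith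
  set ε' : ℝ := ε * (1 - ρ) / 2 with hε'def
  have hε' : 0 < ε' := by positivity
  obtain ⟨M, hM⟩ := (Metric.tendsto_atTop.mp hgf) ε' hε'
  have hgM : ∀ m, M ≤ m → g m ≤ ε' * f m := by
    intro m hm
    have := hM m hm
    rw [Real.dist_eq, sub_zero, abs_div, abs_of_nonneg (hg m),
      abs_of_nonneg (by linarith [hf1 m])] at this
    have hfm : 0 < f m := lt_of_lt_of_le one_pos (hf1 m)
    calc g m = g m / f m * f m := by field_simp
    _ ≤ ε' * f m := mul_le_mul_of_nonneg_right (le_of_lt this) hfm.le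
  set B : ℝ := ∑ m ∈ range M, g m with hB
  have hBnn : 0 ≤ B := Finset.sum_nonneg fun m _ => hg m
  have htend : Tendsto (fun k : ℕ => ρ^(k+1-M) * B) atTop (𝓝 0) := by
    have h := tendsto_pow_atTop_nhds_zero_of_lt_one h0 h1
    have : Tendsto (fun k : ℕ => ρ ^ (k + 1 - M)) atTop (𝓝 0) :=
      h.comp (tendsto_atTop_atTop.mpr fun b => ⟨b + M, fun a ha => by omega⟩)
    simpa using this.mul_const B
  obtain ⟨K, hK⟩ := (Metric.tendsto_atTop.mp htend) (ε/2) (by linarith)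
  refine ⟨max K M, fun k hk => ?_⟩
  have hkK : K ≤ k := le_trans (le_max_left _ _) hk
  have hkM : M ≤ k := le_trans (le_max_right _ _) hk
  have hfk : (0:ℝ) < f k := lt_of_lt_of_le one_pos (hf1 k)
  rw [Real.dist_eq, sub_zero]
  have hsum_nn : 0 ≤ ∑ m ∈ range (k+1), ρ^(k-m) * g m :=
    Finset.sum_nonneg fun m _ => mul_nonneg (pow_nonneg h0 _) (hg m)
  rw [abs_of_nonneg (div_nonneg hsum_nn hfk.le), div_lt_iff₀ hfk]
  have hsplit : ∑ m ∈ range (k+1), ρ^(k-m) * g m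
      = ∑ m ∈ range M, ρ^(k-m) * g m + ∑ m ∈ Ico M (k+1), ρ^(k-m) * g m := by
    rw [range_eq_Ico, ← Finset.sum_Ico_consecutive _ (Nat.zero_le M) (by omega), ← range_eq_Ico]
  have h1' : ∑ m ∈ range M, ρ^(k-m) * g m ≤ ρ^(k+1-M) * B := by
    rw [hB, Finset.mul_sum]
    apply Finset.sum_le_sum
    intro m hm
    have hmM : m < M := Finset.mem_range.mp hm
    exact mul_le_mul_of_nonneg_right (pow_le_pow_of_le_one h0 h1.le (by omega)) (hg m)
  have h2' : ∑ m ∈ Ico M (k+1), ρ^(k-m) * g m ≤ ε' * (f k / (1-ρ)) := by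
    calc ∑ m ∈ Ico M (k+1), ρ^(k-m) * g m
        ≤ ∑ m ∈ Ico M (k+1), ρ^(k-m) * (ε' * f k) := by
          apply Finset.sum_le_sum
          intro m hm
          obtain ⟨hm1, hm2⟩ := Finset.mem_Ico.mp hm
          apply mul_le_mul_of_nonneg_left _ (pow_nonneg h0 _)
          exact le_trans (hgM m hm1) (mul_le_mul_of_nonneg_left (hfmono (by omega)) hε'.le)
      _ = (∑ m ∈ Ico M (k+1), ρ^(k-m)) * (ε' * f k) := by rw [Finset.sum_mul]
      _ ≤ (1/(1-ρ)) * (ε' * f k) := by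
          apply mul_le_mul_of_nonneg_right _ (by positivity)
          calc ∑ m ∈ Ico M (k+1), ρ^(k-m) ≤ ∑ m ∈ range (k+1), ρ^(k-m) := by
                apply Finset.sum_le_sum_of_subset_of_nonneg
                · rw [range_eq_Ico]; exact Finset.Ico_subset_Ico (Nat.zero_le _) le_rfl
                · intro m _ _; exact pow_nonneg h0 _
            _ = ∑ j ∈ range (k+1), ρ^j := by
                rw [← Finset.sum_range_reflect (fun j => ρ^j) (k+1)]
                exact Finset.sum_congr rfl fun m hm => by
                  have : k + 1 - 1 - m = k - m := by omega
                  rw [this]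
            _ ≤ 1/(1-ρ) := geom_bd ρ h0 h1 _
      _ = ε' * (f k / (1-ρ)) := by ring
  have hKk := hK k hkK
  rw [Real.dist_eq, sub_zero, abs_of_nonneg (mul_nonneg (pow_nonneg h0 _) hBnn)] at hKk
  calc ∑ m ∈ range (k+1), ρ^(k-m) * g m
      ≤ ρ^(k+1-M) * B + ε' * (f k / (1-ρ)) := by rw [hsplit]; exact add_le_add h1' h2'
    _ < ε/2 + ε/2 * f k := by
        apply add_lt_add_of_lt_of_le hKk
        rw [hε'def]
        apply le_of_eq; field_simp
    _ ≤ ε/2 * f k + ε/2 * f k := by nlinarith [hf1 k]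
    _ = ε * f k := by ring

/-- Asymptotics of the mean of the RCD decision vector: with a weight matrix
`W = (1/N)·𝟙𝟙ᵀ + S D Sᵀ` (`SᵀS = I`, `Sᵀ𝟙 = 0`, `|d_j| < 1`) and a whitened
signal `θ̂` whose cumulative energy satisfies
`∑_{m=0}^k ‖θ̂(m)‖² = α f(k) + o(f(k))` for a time-scaling `f`, the recursion
`μ(k+1) = W μ(k) + (1/2) θ̂(k+1) ⊙ θ̂(k+1)`, `μ(0) = (1/2) θ̂(0) ⊙ θ̂(0)`
satisfies `μ(k)/f(k) → (α/(2N))·𝟙`. -/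
theorem rcd_mean_limit (N : ℕ) (hN : 1 ≤ N)
    (W : Matrix (Fin N) (Fin N) ℝ) (hWsymm : W.IsSymm)
    (S : Matrix (Fin N) (Fin (N - 1)) ℝ)
    (D : Matrix (Fin (N - 1)) (Fin (N - 1)) ℝ)
    (hD_diag : ∀ i j : Fin (N - 1), i ≠ j → D i j = 0)
    (hD_lt : ∀ i : Fin (N - 1), |D i i| < 1)
    (hS_orth : Sᵀ * S = 1)
    (hS_ones : Sᵀ.mulVec (fun _ => (1 : ℝ)) = 0)
    (hW : W = (N : ℝ)⁻¹ • Matrix.of (fun _ _ => (1 : ℝ)) + S * D * Sᵀ)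
    (f : ℕ → ℝ) (hf : (∀ k, f k = (k : ℝ) + 1) ∨ (∀ k, f k = 1))
    (θhat : ℕ → Fin N → ℝ) (α : ℝ) (hα : 0 < α)
    (hgrowth : Tendsto
      (fun k => ((∑ m ∈ Finset.range (k + 1), ∑ i, θhat m i ^ 2) - α * f k) / f k)
      atTop (𝓝 0))
    (μ : ℕ → Fin N → ℝ)
    (hμ0 : μ 0 = fun i => (1 / 2) * (θhat 0 i * θhat 0 i))
    (hμrec : ∀ k : ℕ,
      μ (k + 1) = W.mulVec (μ k) + fun i => (1 / 2) * (θhat (k + 1) i * θhat (k + 1) i)) :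
    ∀ i : Fin N, Tendsto (fun k => μ k i / f k) atTop (𝓝 (α / (2 * N))) := by
  have hN0 : (0:ℝ) < (N:ℝ) := by exact_mod_cast Nat.lt_of_lt_of_le Nat.zero_lt_one hN
  -- f facts
  have hf1 : ∀ k, 1 ≤ f k := by
    rcases hf with hf | hf <;> intro k <;> rw [hf k]
    · have : (0:ℝ) ≤ k := Nat.cast_nonneg k
      linarith
  have hfpos : ∀ k, (0:ℝ) < f k := fun k => lt_of_lt_of_le one_pos (hf1 k)
  have hfmono : Monotone f := by
    rcases hf with hf | hf
    · intro x y hxy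
      rw [hf x, hf y]
      have : (x:ℝ) ≤ y := by exact_mod_cast hxy
      linarith
    · intro x y _; rw [hf x, hf y]
  -- spectral radius bound ρ
  obtain ⟨ρ, hρ0, hρ1, hρD⟩ : ∃ ρ : ℝ, 0 ≤ ρ ∧ ρ < 1 ∧ ∀ i, |D i i| ≤ ρ := by
    rcases isEmpty_or_nonempty (Fin (N-1)) with h | h
    · exact ⟨0, le_refl 0, one_pos, fun i => isEmptyElim i⟩
    · obtain ⟨i₀, -, hi₀⟩ := Finset.exists_max_image Finset.univ (fun i => |D i i|)
        ⟨Classical.arbitrary _, Finset.mem_univ _⟩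
      exact ⟨|D i₀ i₀|, abs_nonneg _, hD_lt i₀, fun i => hi₀ i (Finset.mem_univ i)⟩
  -- notation
  set s : ℕ → ℝ := fun m => (1/2) * ∑ i, θhat m i ^ 2 with hs_def
  set v : ℕ → Fin N → ℝ := fun m i => (1/2) * (θhat m i * θhat m i) with hv_def
  set a : ℕ → ℝ := fun k => ∑ i, μ k i with ha_def
  set r : ℕ → Fin N → ℝ := fun k i => μ k i - a k / N with hr_def
  have hs_nonneg : ∀ m, 0 ≤ s m := fun m => by
    apply mul_nonneg (by norm_num) (Finset.sum_nonneg fun i _ => sq_nonneg _)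
  have hv_nonneg : ∀ m i, 0 ≤ v m i := fun m i => by
    apply mul_nonneg (by norm_num) (mul_self_nonneg _)
  have hsv : ∀ m, ∑ i, v m i = s m := fun m => by
    show ∑ i, (1/2) * (θhat m i * θhat m i) = (1/2) * ∑ i, θhat m i ^ 2
    rw [Finset.mul_sum]
    exact Finset.sum_congr rfl fun i _ => by ring
  -- matrix structure facts
  have hSDST1 : (S * D * Sᵀ).mulVec (fun _ => (1:ℝ)) = 0 := by
    rw [Matrix.mul_assoc, ← Matrix.mulVec_mulVec, ← Matrix.mulVec_mulVec, hS_ones,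
      Matrix.mulVec_zero, Matrix.mulVec_zero]
  have hrow : ∀ i, ∑ j, W i j = 1 := by
    intro i
    have h0 : ∑ j, (S * D * Sᵀ) i j = ((S * D * Sᵀ).mulVec (fun _ => (1:ℝ))) i := by
      simp [Matrix.mulVec, dotProduct]
    rw [hW]
    simp only [Matrix.add_apply, Matrix.smul_apply, Matrix.of_apply, smul_eq_mul, mul_one]
    rw [Finset.sum_add_distrib, h0, hSDST1]
    simp [Finset.card_univ]
    field_simp
  have hcol : ∀ j, ∑ i, W i j = 1 := by
    intro j
    have : ∀ i, W i j = W j i := fun i => by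
      conv_lhs => rw [← hWsymm]
      rfl
    rw [Finset.sum_congr rfl fun i _ => this i]
    exact hrow j
  -- sum recursion for a
  have ha_rec : ∀ k, a (k+1) = a k + s (k+1) := by
    intro k
    rw [ha_def]
    simp only [hμrec k, Pi.add_apply]
    rw [Finset.sum_add_distrib]
    congr 1
    · rw [show ∑ i, (W.mulVec (μ k)) i = ∑ i, ∑ j, W i j * μ k j from
        Finset.sum_congr rfl fun i _ => rfl]
      rw [Finset.sum_comm]
      calc ∑ j, ∑ i, W i j * μ k j = ∑ j, (∑ i, W i j) * μ k j := by
            exact Finset.sum_congr rfl fun j _ => (Finset.sum_mul _ _ _).symm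
        _ = ∑ j, μ k j := Finset.sum_congr rfl fun j _ => by rw [hcol j, one_mul]
    · exact (hsv (k+1)) ▸ rfl
  have ha0 : a 0 = s 0 := by
    rw [ha_def]; simp only [hμ0]; exact hsv 0
  have haS : ∀ k, a k = ∑ m ∈ range (k+1), s m := by
    intro k
    induction k with
    | zero => simpa using ha0
    | succ n ih => rw [ha_rec n, ih, ← Finset.sum_range_succ]
  -- a k / f k → α/2
  have hT : Tendsto (fun k => (a k - (α/2) * f k) / f k) atTop (𝓝 0) := by
    have h1 : Tendsto (fun k => (a k - (α/2) * f k) / f k) atTop (𝓝 0) := by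
      have : (fun k => (a k - (α/2) * f k) / f k)
          = fun k => (1/2) * (((∑ m ∈ Finset.range (k + 1), ∑ i, θhat m i ^ 2) - α * f k) / f k) := by
        funext k
        rw [haS k, hs_def]
        rw [← Finset.mul_sum]
        ring
      rw [this]
      have h := hgrowth.const_mul ((1:ℝ)/2)
      rw [mul_zero] at h
      exact h
    exact h1
  have haf : Tendsto (fun k => a k / f k) atTop (𝓝 (α/2)) := by
    have h1 := hT
    have h2 : (fun k => a k / f k) = fun k => (a k - (α/2) * f k) / f k + α/2 := by
      funext k
      have hfk := (hfpos k).ne'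
      field_simp
      ring
    rw [h2]
    simpa using h1.add_const (α/2)
  -- r facts
  have hrsum : ∀ k, ∑ j, r k j = 0 := by
    intro k
    rw [hr_def]
    simp only
    rw [Finset.sum_sub_distrib]
    simp [Finset.card_univ, ← ha_def]
    field_simp
    exact sub_eq_zero.mpr rfl
  have hr_rec : ∀ k, (fun i => r (k+1) i)
      = (fun i => ((S * D * Sᵀ).mulVec (r k)) i) + fun i => (v (k+1) i - s (k+1) / N) := by
    intro k
    funext i
    simp only [Pi.add_apply, hr_def]
    rw [hμrec k]
    simp only [Pi.add_apply]
    rw [ha_rec k]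
    have hWmu : (W.mulVec (μ k)) i = ((S * D * Sᵀ).mulVec (r k)) i + a k / N := by
      have hμval : ∀ j, μ k j = r k j + a k / N := fun j => by rw [hr_def]; ring
      calc (W.mulVec (μ k)) i = ∑ j, W i j * μ k j := rfl
        _ = ∑ j, (W i j * r k j + W i j * (a k / N)) := by
            exact Finset.sum_congr rfl fun j _ => by rw [hμval j]; ring
        _ = ∑ j, W i j * r k j + (∑ j, W i j) * (a k / N) := by
            rw [Finset.sum_add_distrib, Finset.sum_mul]
        _ = ∑ j, W i j * r k j + a k / N := by rw [hrow i, one_mul]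
        _ = ((S * D * Sᵀ).mulVec (r k)) i + a k / N := by
            congr 1
            have : ∀ j, W i j = (N:ℝ)⁻¹ + (S * D * Sᵀ) i j := fun j => by
              rw [hW]; simp [Matrix.add_apply, Matrix.smul_apply, Matrix.of_apply]
            calc ∑ j, W i j * r k j = ∑ j, ((N:ℝ)⁻¹ * r k j + (S * D * Sᵀ) i j * r k j) := by
                  exact Finset.sum_congr rfl fun j _ => by rw [this j]; ring
              _ = (N:ℝ)⁻¹ * ∑ j, r k j + ∑ j, (S * D * Sᵀ) i j * r k j := by
                  rw [Finset.sum_add_distrib, Finset.mul_sum]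
              _ = ((S * D * Sᵀ).mulVec (r k)) i := by rw [hrsum k]; simp [Matrix.mulVec, dotProduct]
    rw [hWmu]
    have : v (k+1) i = (1/2) * (θhat (k+1) i * θhat (k+1) i) := rfl
    rw [← this]
    ring
  -- contraction estimates
  have hSnorm : ∀ y : Fin (N-1) → ℝ, ∑ i, (S.mulVec y) i ^ 2 = ∑ j, y j ^ 2 := by
    intro y
    have e1 : (S.mulVec y) ⬝ᵥ (S.mulVec y) = y ⬝ᵥ y := by
      rw [dotProduct_mulVec]
      congr 1
      rw [← Matrix.transpose_transpose S, Matrix.vecMul_transpose, Matrix.transpose_transpose,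
        Matrix.mulVec_mulVec, hS_orth, Matrix.one_mulVec]
    calc ∑ i, (S.mulVec y) i ^ 2 = (S.mulVec y) ⬝ᵥ (S.mulVec y) := by simp [dotProduct, sq]
      _ = y ⬝ᵥ y := e1
      _ = ∑ j, y j ^ 2 := by simp [dotProduct, sq]
  have hSTle : ∀ x : Fin N → ℝ, ∑ j, (Sᵀ.mulVec x) j ^ 2 ≤ ∑ i, x i ^ 2 := by
    intro x
    set u : Fin (N-1) → ℝ := Sᵀ.mulVec x with hu
    have key : ∑ j, u j ^ 2 = ∑ i, x i * (S.mulVec u) i := by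
      calc ∑ j, u j ^ 2 = u ⬝ᵥ u := by simp [dotProduct, sq]
        _ = x ⬝ᵥ (S.mulVec u) := by
            conv_lhs => rw [hu, Matrix.mulVec_transpose]
            rw [← dotProduct_mulVec, hu, Matrix.mulVec_transpose]
        _ = ∑ i, x i * (S.mulVec u) i := rfl
    have hcs : (∑ i, x i * (S.mulVec u) i)^2 ≤ (∑ i, x i ^2) * (∑ i, (S.mulVec u) i ^2) :=
      Finset.sum_mul_sq_le_sq_mul_sq Finset.univ x (S.mulVec u)
    rw [hSnorm u] at hcs
    rw [← key] at hcs
    have hA : (0:ℝ) ≤ ∑ j, u j ^ 2 := Finset.sum_nonneg fun j _ => sq_nonneg _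
    have hB : (0:ℝ) ≤ ∑ i, x i ^ 2 := Finset.sum_nonneg fun i _ => sq_nonneg _
    rcases eq_or_lt_of_le hA with h | h
    · rw [← h]; exact hB
    · nlinarith
  have hDle : ∀ y : Fin (N-1) → ℝ, ∑ j, (D.mulVec y) j ^ 2 ≤ ρ^2 * ∑ j, y j ^ 2 := by
    intro y
    have hdiag : ∀ j, (D.mulVec y) j = D j j * y j := by
      intro j
      show ∑ l, D j l * y l = D j j * y j
      apply Finset.sum_eq_single j
      · intro b _ hb
        rw [hD_diag j b (Ne.symm hb), zero_mul]
      · intro h; exact absurd (Finset.mem_univ j) h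
    rw [Finset.mul_sum]
    apply Finset.sum_le_sum
    intro j _
    rw [hdiag j]
    have h1 : (D j j)^2 ≤ ρ^2 := sq_le_sq' (by linarith [(abs_le.mp (hρD j)).1]) (abs_le.mp (hρD j)).2
    nlinarith [sq_nonneg (y j), sq_nonneg (D j j)]
  have hcontr : ∀ x : Fin N → ℝ, enorm' ((S * D * Sᵀ).mulVec x) ≤ ρ * enorm' x := by
    intro x
    apply enorm'_le_of_sq_le _ _ (mul_nonneg hρ0 (enorm'_nonneg x))
    have e1 : (S * D * Sᵀ).mulVec x = S.mulVec (D.mulVec (Sᵀ.mulVec x)) := by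
      rw [Matrix.mul_assoc, ← Matrix.mulVec_mulVec, ← Matrix.mulVec_mulVec]
    rw [e1, hSnorm]
    calc ∑ j, (D.mulVec (Sᵀ.mulVec x)) j ^2 ≤ ρ^2 * ∑ j, (Sᵀ.mulVec x) j ^2 :=
          hDle _
      _ ≤ ρ^2 * ∑ i, x i ^2 := mul_le_mul_of_nonneg_left (hSTle x) (sq_nonneg ρ)
      _ = (ρ * enorm' x)^2 := by rw [mul_pow, enorm'_sq]
  -- bound on the perturbation term
  have hw_bound : ∀ m, enorm' (fun i => v m i - s m / N) ≤ 2 * s m := by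
    intro m
    apply (enorm'_le_sum_abs _).trans
    have hsN : 0 ≤ s m / N := div_nonneg (hs_nonneg m) hN0.le
    calc ∑ i, |v m i - s m / N| ≤ ∑ i : Fin N, (v m i + s m / N) := by
          apply Finset.sum_le_sum
          intro i _
          rw [sub_eq_add_neg]
          refine (abs_add_le _ _).trans ?_
          rw [abs_neg, abs_of_nonneg (hv_nonneg m i), abs_of_nonneg hsN]
      _ = s m + (N : ℝ) * (s m / N) := by
          rw [Finset.sum_add_distrib, hsv m, Finset.sum_const, Finset.card_univ]
          simp [nsmul_eq_mul]
      _ = 2 * s m := by field_simp; ring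
  -- main norm bound by induction
  have hrb : ∀ k, enorm' (fun i => r k i) ≤ 2 * ∑ m ∈ range (k+1), ρ^(k-m) * s m := by
    intro k
    induction k with
    | zero =>
      have hr0 : (fun i => r 0 i) = fun i => v 0 i - s 0 / N := by
        funext i
        show μ 0 i - a 0 / N = v 0 i - s 0 / N
        rw [ha0, hμ0]
      rw [hr0]
      simpa using hw_bound 0
    | succ k ih =>
      have e := hr_rec k
      calc enorm' (fun i => r (k+1) i)
          ≤ enorm' (fun i => ((S * D * Sᵀ).mulVec (r k)) i)
            + enorm' (fun i => v (k+1) i - s (k+1) / N) := by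
            rw [e]; exact enorm'_add_le _ _
        _ ≤ ρ * enorm' (fun i => r k i) + 2 * s (k+1) := by
            have h1 : enorm' (fun i => ((S * D * Sᵀ).mulVec (r k)) i)
                ≤ ρ * enorm' (fun i => r k i) := hcontr (r k)
            exact add_le_add h1 (hw_bound (k+1))
        _ ≤ ρ * (2 * ∑ m ∈ range (k+1), ρ^(k-m) * s m) + 2 * s (k+1) := by
            have := mul_le_mul_of_nonneg_left ih hρ0
            linarith
        _ = 2 * ∑ m ∈ range (k+2), ρ^(k+1-m) * s m := by
            rw [Finset.sum_range_succ (f := fun m => ρ^(k+1-m) * s m)]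
            rw [Nat.sub_self, pow_zero, one_mul]
            have : ∑ m ∈ range (k+1), ρ^(k+1-m) * s m
                = ρ * ∑ m ∈ range (k+1), ρ^(k-m) * s m := by
              rw [Finset.mul_sum]
              apply Finset.sum_congr rfl
              intro m hm
              have hmk : m ≤ k := Nat.lt_succ_iff.mp (Finset.mem_range.mp hm)
              rw [show k + 1 - m = (k - m) + 1 by omega, pow_succ]
              ring
            rw [this]
            ring
  -- s m / f m → 0
  have hsf : Tendsto (fun m => s m / f m) atTop (𝓝 0) := by
    rw [← tendsto_add_atTop_iff_nat 1]
    have hthird : Tendsto (fun k => (α/2) * ((f (k+1) - f k) / f (k+1))) atTop (𝓝 0) := by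
      rcases hf with hfc | hfc
      · have h1 : (fun k : ℕ => (α/2) * ((f (k+1) - f k) / f (k+1)))
            = fun k : ℕ => (α/2) * (1 / ((k:ℝ)+2)) := by
          funext k
          rw [hfc (k+1), hfc k]
          push_cast
          ring_nf
        rw [h1]
        have h2 : Tendsto (fun k : ℕ => 1 / ((k:ℝ)+2)) atTop (𝓝 0) := by
          have he : (fun k : ℕ => 1/((k:ℝ)+2))
              = (fun k : ℕ => 1/((k:ℝ)+1)) ∘ (fun k : ℕ => k+1) := by
            funext k
            simp only [Function.comp_apply]
            push_cast
            ring_nf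
          rw [he]
          exact tendsto_one_div_add_atTop_nhds_zero_nat.comp (tendsto_add_atTop_nat 1)
        simpa using h2.const_mul (α/2)
      · have h1 : (fun k : ℕ => (α/2) * ((f (k+1) - f k) / f (k+1))) = fun _ : ℕ => (0:ℝ) := by
          funext k
          rw [hfc (k+1), hfc k]
          ring
        rw [h1]
        exact tendsto_const_nhds
    apply squeeze_zero_norm
      (a := fun k => |((a (k+1) - (α/2) * f (k+1)) / f (k+1))| + |((a k - (α/2) * f k) / f k)|
        + (α/2) * ((f (k+1) - f k) / f (k+1)))
    · intro k
      have hfk1 : (0:ℝ) < f (k+1) := hfpos (k+1)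
      have hmono : f k ≤ f (k+1) := hfmono (Nat.le_succ k)
      have hse : s (k+1) = (a (k+1) - (α/2) * f (k+1)) - (a k - (α/2) * f k)
          + (α/2) * (f (k+1) - f k) := by
        have h := ha_rec k
        have h2 : s (k+1) = a (k+1) - a k := by linarith
        rw [h2]
        ring
      have e : s (k+1) / f (k+1) = (a (k+1) - (α/2) * f (k+1)) / f (k+1)
          - (a k - (α/2) * f k) / f (k+1) + (α/2) * ((f (k+1) - f k) / f (k+1)) := by
        rw [hse]
        ring
      rw [Real.norm_eq_abs, e]
      have t1 : |(a (k+1) - (α/2) * f (k+1)) / f (k+1)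
          - (a k - (α/2) * f k) / f (k+1) + (α/2) * ((f (k+1) - f k) / f (k+1))|
          ≤ |(a (k+1) - (α/2) * f (k+1)) / f (k+1)|
          + |(a k - (α/2) * f k) / f (k+1)|
          + |(α/2) * ((f (k+1) - f k) / f (k+1))| := by
        refine (abs_add_le _ _).trans ?_
        have := abs_sub ((a (k+1) - (α/2) * f (k+1)) / f (k+1)) ((a k - (α/2) * f k) / f (k+1))
        linarith
      refine t1.trans ?_
      have t2 : |(a k - (α/2) * f k) / f (k+1)| ≤ |(a k - (α/2) * f k) / f k| := by
        rw [abs_div, abs_div, abs_of_pos hfk1, abs_of_pos (hfpos k)]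
        apply div_le_div_of_nonneg_left (abs_nonneg _) (hfpos k) hmono
      have t3 : |(α/2) * ((f (k+1) - f k) / f (k+1))| = (α/2) * ((f (k+1) - f k) / f (k+1)) := by
        apply abs_of_nonneg
        apply mul_nonneg (by linarith)
        apply div_nonneg (by linarith) hfk1.le
      rw [t3]
      linarith
    · have hT1 : Tendsto (fun k => |(a (k+1) - (α/2) * f (k+1)) / f (k+1)|) atTop (𝓝 0) := by
        have := (hT.comp (tendsto_add_atTop_nat 1)).abs
        simpa using this
      have hT0 : Tendsto (fun k => |(a k - (α/2) * f k) / f k|) atTop (𝓝 0) := by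
        simpa using hT.abs
      have := (hT1.add hT0).add hthird
      simpa using this
  -- conclusion
  intro i
  have hconv := conv_lemma ρ hρ0 hρ1 f s hf1 hfmono hs_nonneg hsf
  have h2 : Tendsto (fun k => r k i / f k) atTop (𝓝 0) := by
    apply squeeze_zero_norm (a := fun k => 2 * ((∑ m ∈ range (k+1), ρ^(k-m) * s m) / f k))
    · intro k
      rw [Real.norm_eq_abs, abs_div, abs_of_pos (hfpos k), ← mul_div_assoc]
      have hfk := hfpos k
      gcongr
      exact (enorm'_coord (fun j => r k j) i).trans (hrb k)
    · simpa using hconv.const_mul 2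
  have h3 : ∀ k, μ k i / f k = (a k / f k) * (N:ℝ)⁻¹ + r k i / f k := by
    intro k
    have hμv : μ k i = r k i + a k / N := by
      show μ k i = (μ k i - a k / N) + a k / N
      ring
    rw [hμv]
    ring
  have final := ((haf.mul_const ((N:ℝ)⁻¹)).add h2).congr (fun k => (h3 k).symm)
  rw [show α/2 * (N:ℝ)⁻¹ + 0 = α/(2*N) by rw [add_zero, ← div_eq_mul_inv, div_div]] at final
  exact final
end

section
/- Let (Σ(k))_{k≥0} be a nested sequence of positive definite matrices, Σ(k) ∈ ℝ^{(k+1)×(k+1)}, meaning Σ(k−1) is the leading principal k×k submatrix of Σ(k) for every k ≥ 1. Let (θ(k)) and (y(k)) be nested vectors, θ(k), y(k) ∈ ℝ^{k+1}, meaning the first k entries of θ(k) equal θ(k−1) and likewise for y. Let L(k) be the Cholesky factor of Σ(k), and define the whitened vectors θ̂(k) = L(k)⁻¹·θ(k) and ŷ(k) = L(k)⁻¹·y(k), with last (index-k) components denoted θ̂_k and ŷ_k. Define the log-likelihood statistic l(k) = θ(k)ᵀ·Σ(k)⁻¹·y(k) − (1/2)·θ(k)ᵀ·Σ(k)⁻¹·θ(k).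 Then for every k ≥ 1, l(k) = l(k−1) + θ̂_k·ŷ_k − (1/2)·θ̂_k². -/
open Matrix

lemma dot_quad {n : Type*} [Fintype n] [DecidableEq n]
    (M : Matrix n n ℝ) (x z : n → ℝ) :
    x ⬝ᵥ (M * Mᵀ)⁻¹.mulVec z = M⁻¹.mulVec x ⬝ᵥ M⁻¹.mulVec z := by
  rw [Matrix.mul_inv_rev, ← Matrix.transpose_nonsing_inv, ← Matrix.mulVec_mulVec,
    dotProduct_mulVec, Matrix.vecMul_transpose]

/-- Recursive computation of the log-likelihood statistic: for nested positive
definite covariances `Σ(k)` (with Cholesky factors `L(k)`) and nested vectors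
`θ(k)`, `y(k)`, the statistic
`l(k) = θ(k)ᵀ Σ(k)⁻¹ y(k) − (1/2) θ(k)ᵀ Σ(k)⁻¹ θ(k)` satisfies
`l(k) = l(k−1) + θ̂_k ŷ_k − (1/2) θ̂_k²`, where `θ̂_k` and `ŷ_k` are the last
components of the whitened vectors `L(k)⁻¹ θ(k)` and `L(k)⁻¹ y(k)`. -/
theorem llr_statistic_recursion
    (Sg : (k : ℕ) → Matrix (Fin (k + 1)) (Fin (k + 1)) ℝ)
    (hpd : ∀ k, (Sg k).PosDef)
    (hnest : ∀ k, (Sg (k + 1)).submatrix Fin.castSucc Fin.castSucc = Sg k)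
    (θ y : (k : ℕ) → Fin (k + 1) → ℝ)
    (hθ : ∀ k, (fun i : Fin (k + 1) => θ (k + 1) i.castSucc) = θ k)
    (hy : ∀ k, (fun i : Fin (k + 1) => y (k + 1) i.castSucc) = y k)
    (L : (k : ℕ) → Matrix (Fin (k + 1)) (Fin (k + 1)) ℝ)
    (hL_low : ∀ k, ∀ i j : Fin (k + 1), i < j → L k i j = 0)
    (hL_diag : ∀ k, ∀ i : Fin (k + 1), 0 < L k i i)
    (hLLt : ∀ k, L k * (L k)ᵀ = Sg k) :
    ∀ k : ℕ,
      θ (k + 1) ⬝ᵥ (Sg (k + 1))⁻¹.mulVec (y (k + 1))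
          - (1 / 2) * (θ (k + 1) ⬝ᵥ (Sg (k + 1))⁻¹.mulVec (θ (k + 1)))
        = (θ k ⬝ᵥ (Sg k)⁻¹.mulVec (y k)
            - (1 / 2) * (θ k ⬝ᵥ (Sg k)⁻¹.mulVec (θ k)))
          + ((L (k + 1))⁻¹.mulVec (θ (k + 1)) (Fin.last (k + 1)))
              * ((L (k + 1))⁻¹.mulVec (y (k + 1)) (Fin.last (k + 1)))
          - (1 / 2) * ((L (k + 1))⁻¹.mulVec (θ (k + 1)) (Fin.last (k + 1))) ^ 2 := by
  intro k
  set L1 := L (k + 1) with hL1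
  set A : Matrix (Fin (k+1)) (Fin (k+1)) ℝ := L1.submatrix Fin.castSucc Fin.castSucc with hA
  -- L1 is invertible
  have hdetL1 : IsUnit L1.det := by
    have h := congrArg Matrix.det (hLLt (k+1))
    rw [Matrix.det_mul, Matrix.det_transpose] at h
    have : (Sg (k+1)).det ≠ 0 := ne_of_gt (hpd (k+1)).det_pos
    exact isUnit_iff_ne_zero.mpr (fun h0 => this (by rw [← h, h0, zero_mul]))
  -- A * Aᵀ = Sg k
  have hAAt : A * Aᵀ = Sg k := by
    rw [← hnest k, ← hLLt (k+1)]
    ext i j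
    simp only [Matrix.mul_apply, Matrix.transpose_apply, Matrix.submatrix_apply, hA]
    conv_rhs => rw [Fin.sum_univ_castSucc]
    have : L1 i.castSucc (Fin.last (k+1)) = 0 :=
      hL_low (k+1) _ _ (Fin.castSucc_lt_last i)
    rw [show L (k+1) i.castSucc (Fin.last (k+1)) = 0 from this, zero_mul, add_zero]
  have hdetA : IsUnit A.det := by
    have h := congrArg Matrix.det hAAt
    rw [Matrix.det_mul, Matrix.det_transpose] at h
    have : (Sg k).det ≠ 0 := ne_of_gt (hpd k).det_pos
    exact isUnit_iff_ne_zero.mpr (fun h0 => this (by rw [← h, h0, zero_mul]))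
  -- nesting of whitened vectors
  have hnestvec : ∀ (x : Fin (k+2) → ℝ) (xk : Fin (k+1) → ℝ),
      (fun i : Fin (k+1) => x i.castSucc) = xk →
      ∀ i : Fin (k+1), L1⁻¹.mulVec x i.castSucc = A⁻¹.mulVec xk i := by
    intro x xk hx i
    set u := L1⁻¹.mulVec x with hu
    have hLu : L1.mulVec u = x := by
      rw [hu, Matrix.mulVec_mulVec, Matrix.mul_nonsing_inv _ hdetL1, Matrix.one_mulVec]
    have hAu : A.mulVec (fun i : Fin (k+1) => u i.castSucc) = xk := by
      funext j
      have hx' : x j.castSucc = xk j := by rw [← hx]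
      rw [← hx']
      conv_rhs => rw [← hLu]
      simp only [Matrix.mulVec, dotProduct, Matrix.submatrix_apply, hA]
      conv_rhs => rw [Fin.sum_univ_castSucc]
      have : L1 j.castSucc (Fin.last (k+1)) = 0 :=
        hL_low (k+1) _ _ (Fin.castSucc_lt_last j)
      simp [this]
    calc u i.castSucc = A⁻¹.mulVec (A.mulVec (fun i : Fin (k+1) => u i.castSucc)) i := by
          rw [Matrix.mulVec_mulVec, Matrix.nonsing_inv_mul _ hdetA, Matrix.one_mulVec]
      _ = A⁻¹.mulVec xk i := by rw [hAu]
  -- rewrite everything via whitened vectors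
  rw [← hLLt (k+1), ← hAAt, dot_quad, dot_quad, dot_quad, dot_quad]
  set tθ := L1⁻¹.mulVec (θ (k+1)) with htθ
  set ty := L1⁻¹.mulVec (y (k+1)) with hty
  have hθ' : ∀ i : Fin (k+1), tθ i.castSucc = A⁻¹.mulVec (θ k) i :=
    hnestvec _ _ (hθ k)
  have hy' : ∀ i : Fin (k+1), ty i.castSucc = A⁻¹.mulVec (y k) i :=
    hnestvec _ _ (hy k)
  have hdot : ∀ (a b : Fin (k+2) → ℝ) (a' b' : Fin (k+1) → ℝ),
      (∀ i : Fin (k+1), a i.castSucc = a' i) →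
      (∀ i : Fin (k+1), b i.castSucc = b' i) →
      a ⬝ᵥ b = a' ⬝ᵥ b' + a (Fin.last (k+1)) * b (Fin.last (k+1)) := by
    intro a b a' b' ha hb
    simp only [dotProduct]
    rw [Fin.sum_univ_castSucc]
    congr 1
    exact Finset.sum_congr rfl (fun i _ => by rw [ha i, hb i])
  rw [hdot tθ ty _ _ hθ' hy', hdot tθ tθ _ _ hθ' hθ']
  ring
end
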